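/- arXiv:math/0612740 — 4 statements merged into one kernel-verified Lean document; each statement's English description precedes it below -/
import Mathlib

section
/- Let A be a Hermitian operator on a finite-dimensional complex inner product space V with a decomposition V = U_0 ⊕ U_1 ⊕ ⋯ ⊕ U_D into pairwise orthogonal subspaces such that A U_i ⊆ U_{i−1} + U_i + U_{i+1} for all i (with U_{−1} = U_{D+1} = 0, a 'tridiagonal' action). If χ ∈ U_δ + U_{δ+1} + ⋯ + U_D for some δ, and χ lies in a sum of at most s distinct eigenspaces of A, then A^k χ ∈ U_{δ−s+1} + ⋯ + U_D for every k ≥ 0. -/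
/-- Let `A` be a Hermitian operator on a finite-dimensional complex inner
product space `V` with an orthogonal decomposition `V = U_0 ⊕ ⋯ ⊕ U_D` on which `A` acts
tridiagonally.  If `χ ∈ U_δ + ⋯ + U_D` and `χ` is a sum of eigenvectors of `A` for `s`
distinct eigenvalues, then `A^k χ ∈ U_{δ-s+1} + ⋯ + U_D` for every `k ≥ 0`. -/
theorem tridiagonal_cyclic_confinement
    {V : Type*} [NormedAddCommGroup V] [InnerProductSpace ℂ V] [FiniteDimensional ℂ V]
    (D : ℕ) (U : ℕ → Submodule ℂ V)
    (hUtop : (⨆ i ∈ Finset.range (D + 1), U i) = ⊤)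
    (hUorth : ∀ i j, i ≠ j → ∀ u ∈ U i, ∀ w ∈ U j, (inner ℂ u w : ℂ) = 0)
    (A : V →ₗ[ℂ] V) (hA : A.IsSymmetric)
    (htri : ∀ i ≤ D, ∀ u ∈ U i, A u ∈ U (i - 1) ⊔ U i ⊔ U (i + 1))
    (δ s : ℕ) (hs : 1 ≤ s) (hsδ : s ≤ δ) (hδD : δ ≤ D)
    (θ : Fin s → ℝ) (hθ : Function.Injective θ)
    (v : Fin s → V) (hv : ∀ j, A (v j) = (θ j : ℂ) • v j)
    (χ : V) (hχ : χ = ∑ j, v j)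
    (hχmem : χ ∈ ⨆ i ∈ Finset.Icc δ D, U i) :
    ∀ k : ℕ, (A ^ k) χ ∈ ⨆ i ∈ Finset.Icc (δ - s + 1) D, U i := by
  classical
  set W : ℕ → Submodule ℂ V := fun a => ⨆ i ∈ Finset.Icc a D, U i with hW
  -- U j = ⊥ for j > D
  have hUbot : ∀ j, D < j → U j = ⊥ := by
    intro j hj
    rw [Submodule.eq_bot_iff]
    intro u hu
    have hker : (⨆ i ∈ Finset.range (D + 1), U i) ≤
        LinearMap.ker ((innerSL ℂ u : V →L[ℂ] ℂ) : V →ₗ[ℂ] ℂ) := by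
      refine iSup_le fun i => iSup_le fun hi => ?_
      intro w hw
      have hij : j ≠ i := by
        have := Finset.mem_range.mp hi; omega
      simpa using hUorth j i hij u hu w hw
    have : u ∈ LinearMap.ker ((innerSL ℂ u : V →L[ℂ] ℂ) : V →ₗ[ℂ] ℂ) := by
      apply hker
      rw [hUtop]; trivial
    have h0 : (inner ℂ u u : ℂ) = 0 := by simpa using this
    exact inner_self_eq_zero.mp h0
  have hUW : ∀ a i, a ≤ i → i ≤ D → U i ≤ W a := by
    intro a i h1 h2
    exact le_iSup_of_le i (le_iSup_of_le (Finset.mem_Icc.mpr ⟨h1, h2⟩) le_rfl)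
  have hWmono : ∀ a b, a ≤ b → W b ≤ W a := by
    intro a b hab
    refine iSup_le fun i => iSup_le fun hi => ?_
    rw [Finset.mem_Icc] at hi
    exact hUW a i (by omega) hi.2
  have hAW : ∀ a x, x ∈ W a → A x ∈ W (a - 1) := by
    intro a x hx
    have : Submodule.map A (W a) ≤ W (a - 1) := by
      rw [hW]
      simp only [Submodule.map_iSup]
      refine iSup_le fun i => iSup_le fun hi => ?_
      rw [Finset.mem_Icc] at hi
      rw [Submodule.map_le_iff_le_comap]
      intro u hu
      have h3 := htri i hi.2 u hu
      have hle : U (i - 1) ⊔ U i ⊔ U (i + 1) ≤ W (a - 1) := by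
        refine sup_le (sup_le ?_ ?_) ?_
        · exact hUW _ _ (by omega) (by omega)
        · exact hUW _ _ (by omega) hi.2
        · by_cases h : i = D
          · rw [h, hUbot (D + 1) (by omega)]; exact bot_le
          · exact hUW _ _ (by omega) (by omega)
      exact Submodule.mem_comap.mpr (hle h3)
    exact this ⟨x, hx, rfl⟩
  have hχm : ∀ m, (A ^ m) χ ∈ W (δ - m) := by
    intro m
    induction m with
    | zero => simp only [pow_zero, Module.End.one_apply, Nat.sub_zero]; exact hχmem
    | succ n ih =>
      have he : (A ^ (n + 1)) χ = A ((A ^ n) χ) := by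
        rw [pow_succ', Module.End.mul_apply]
      rw [he]
      have := hAW _ _ ih
      have heq : δ - n - 1 = δ - (n + 1) := by omega
      rwa [heq] at this
  have hpow : ∀ (j : Fin s) (n : ℕ), (A ^ n) (v j) = ((θ j : ℂ) ^ n) • v j := by
    intro j n
    induction n with
    | zero => simp
    | succ m ih =>
      rw [pow_succ', Module.End.mul_apply, ih, map_smul, hv, smul_smul, pow_succ', mul_comm]
  have haeval : ∀ (p : Polynomial ℂ) (j : Fin s),
      (Polynomial.aeval A p) (v j) = p.eval (θ j : ℂ) • v j := by
    intro p j
    induction p using Polynomial.induction_on' with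
    | add p q hp hq => simp [map_add, LinearMap.add_apply, hp, hq, add_smul]
    | monomial n a =>
      rw [Polynomial.aeval_monomial, Polynomial.eval_monomial, Module.End.mul_apply,
        Module.algebraMap_end_apply, hpow, smul_smul]
  have haevalW : ∀ p : Polynomial ℂ, p.natDegree < s →
      (Polynomial.aeval A p) χ ∈ W (δ - s + 1) := by
    intro p hdeg
    rw [Polynomial.aeval_eq_sum_range]
    rw [LinearMap.sum_apply]
    refine Submodule.sum_mem _ fun i hi => ?_
    rw [Finset.mem_range] at hi
    rw [LinearMap.smul_apply]
    refine Submodule.smul_mem _ _ ?_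
    exact hWmono _ _ (by omega) (hχm i)
  have hinj : Set.InjOn (fun j : Fin s => ((θ j : ℂ))) ↑(Finset.univ : Finset (Fin s)) := by
    intro a _ b _ hab
    exact hθ (Complex.ofReal_injective hab)
  have hvW : ∀ j, v j ∈ W (δ - s + 1) := by
    intro j
    set p := Lagrange.basis Finset.univ (fun j : Fin s => ((θ j : ℂ))) j with hp
    have hdeg : p.natDegree < s := by
      rw [hp, Lagrange.natDegree_basis hinj (Finset.mem_univ j)]
      simp
      omega
    have hev : (Polynomial.aeval A p) χ = v j := by
      rw [hχ, map_sum]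
      have : ∀ i : Fin s, (Polynomial.aeval A p) (v i) = (if i = j then (1:ℂ) else 0) • v i := by
        intro i
        rw [haeval]
        by_cases h : i = j
        · subst h; rw [if_pos rfl, Lagrange.eval_basis_self hinj (Finset.mem_univ i)]
        · have h0 := Lagrange.eval_basis_of_ne (v := fun j : Fin s => ((θ j : ℂ)))
            (i := j) (j := i) (fun hh => h hh.symm) (Finset.mem_univ i)
          rw [hp, if_neg h]
          rw [h0]
      simp only [this]
      simp [ite_smul]
    rw [← hev]
    exact haevalW p hdeg
  intro k
  rw [hχ, map_sum]
  refine Submodule.sum_mem _ fun j _ => ?_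
  rw [hpow j k]
  exact Submodule.smul_mem _ _ (hvW j)
end

section
/- Let (X,R) be a symmetric association scheme with D classes, with Bose–Mesner algebra M spanned by the associate matrices A_0 = I, A_1, …, A_D and primitive idempotents E_0 = |X|^{-1}J, E_1, …, E_D. Fix x ∈ X and let E_i^* denote the diagonal dual idempotents with respect to x. Let χ be a code in V = ℂ^X, set δ_x = min{i ≠ 0 : E_i^*χ ≠ 0} and s^* = #{j ≠ 0 : E_jχ ≠ 0}, and suppose the scheme is metric (i.e., A_1 generates M and A_1 E_i^*V ⊆ E_{i−1}^*V + E_i^*V + E_{i+1}^*V for all i). Then for every 0 ≤ ℓ ≤ D and every 1 ≤ i ≤ δ_x − s^*, the vector E_i^*A_ℓχ is a scalar multiple of A_i x̂ (where x̂ is the characteristic vector of x). That is, A_ℓχ is a relative (δ_x − s^*)-codesign with respect to x. -/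
open Matrix

noncomputable section

/-- The standard Hermitian dot product on `X → ℂ` (conjugation on the second argument). -/
def dotc {X : Type*} [Fintype X] (u v : X → ℂ) : ℂ := ∑ y, u y * (starRingEnd ℂ) (v y)

/-- The characteristic vector `x̂` of a vertex. -/
def xhat {X : Type*} [DecidableEq X] (x : X) : X → ℂ := Pi.single x 1

/-- The characteristic vector of a subset. -/
def chiv {X : Type*} [DecidableEq X] (Y : Finset X) : X → ℂ := fun y => if y ∈ Y then 1 else 0

/-- A symmetric association scheme with `D` classes on a finite vertex set `X`,
presented by its associate matrices `A 0 = I, A 1, …, A D` and its primitive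
idempotents `E 0 = |X|⁻¹ J, E 1, …, E D`. -/
structure AssocScheme (X : Type*) [Fintype X] [DecidableEq X] (D : ℕ) where
  A : Fin (D + 1) → Matrix X X ℂ
  E : Fin (D + 1) → Matrix X X ℂ
  A_zero : A 0 = 1
  A_symm : ∀ i, (A i).IsSymm
  A_entries : ∀ i x y, A i x y = 0 ∨ A i x y = 1
  A_sum : ∑ i, A i = Matrix.of fun _ _ => (1 : ℂ)
  A_mul_closed : ∀ i j, ∃ p : Fin (D + 1) → ℂ, A i * A j = ∑ k, p k • A k
  A_comm : ∀ i j, A i * A j = A j * A i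
  E_idem : ∀ i j, E i * E j = if i = j then E i else 0
  E_sum : ∑ j, E j = 1
  E_zero : E 0 = (Fintype.card X : ℂ)⁻¹ • Matrix.of fun _ _ => (1 : ℂ)
  E_in_A : ∀ j, ∃ q : Fin (D + 1) → ℂ, E j = ∑ i, q i • A i
  A_in_E : ∀ i, ∃ q : Fin (D + 1) → ℂ, A i = ∑ j, q j • E j

namespace AssocScheme

variable {X : Type*} [Fintype X] [DecidableEq X] {D : ℕ}

/-- The associate matrices, reindexed by `ℕ` (zero outside `0,…,D`). -/
def AM (S : AssocScheme X D) (i : ℕ) : Matrix X X ℂ :=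
  if h : i < D + 1 then S.A ⟨i, h⟩ else 0

/-- The primitive idempotents, reindexed by `ℕ` (zero outside `0,…,D`). -/
def EM (S : AssocScheme X D) (j : ℕ) : Matrix X X ℂ :=
  if h : j < D + 1 then S.E ⟨j, h⟩ else 0

/-- The dual idempotent `E_i^*(x)`: the diagonal matrix with `(y,y)`-entry `(A_i)_{x y}`. -/
def Estar (S : AssocScheme X D) (x : X) (i : ℕ) : Matrix X X ℂ :=
  Matrix.diagonal fun y => S.AM i x y

/-- The dual associate matrix `A_j^*(x)`: diagonal with `(y,y)`-entry `|X| (E_j)_{x y}`. -/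
def Astar (S : AssocScheme X D) (x : X) (j : ℕ) : Matrix X X ℂ :=
  Matrix.diagonal fun y => (Fintype.card X : ℂ) * S.EM j x y

/-- The subspace `E_i^*(x) V`. -/
def EstarSp (S : AssocScheme X D) (x : X) (i : ℕ) : Submodule ℂ (X → ℂ) :=
  LinearMap.range (S.Estar x i).mulVecLin

/-- The subspace `E_j V`. -/
def ESp (S : AssocScheme X D) (j : ℕ) : Submodule ℂ (X → ℂ) :=
  LinearMap.range (S.EM j).mulVecLin

/-- The scheme is metric (P-polynomial) w.r.t. the ordering `A 0, …, A D`: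
`A 1` generates the Bose–Mesner algebra, and left multiplication by `A 1` acts
tridiagonally on the dual decomposition `V = ⊕ᵢ E_i^*(x) V` for each base vertex. -/
def IsMetric (S : AssocScheme X D) : Prop :=
  (∀ i, S.A i ∈ Algebra.adjoin ℂ {S.A 1}) ∧
  ∀ (x : X) (i : ℕ) (v : X → ℂ), v ∈ S.EstarSp x i →
    (S.A 1).mulVec v ∈ S.EstarSp x (i - 1) ⊔ S.EstarSp x i ⊔ S.EstarSp x (i + 1)

/-- The scheme is cometric (Q-polynomial) w.r.t. the ordering `E 0, …, E D`:
`A_1^*(x)` generates the dual Bose–Mesner algebra and acts tridiagonally on the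
decomposition `V = ⊕ⱼ E_j V`, for each base vertex `x`. -/
def IsCometric (S : AssocScheme X D) : Prop :=
  (∀ (x : X) (j : Fin (D + 1)), S.Astar x j ∈ Algebra.adjoin ℂ {S.Astar x 1}) ∧
  ∀ (x : X) (j : ℕ) (v : X → ℂ), v ∈ S.ESp j →
    (S.Astar x 1).mulVec v ∈ S.ESp (j - 1) ⊔ S.ESp j ⊔ S.ESp (j + 1)

/-- A vector `χ` is a code if `χ ∉ E_0 V` and `χ ∉ E_0^*(z) V` for every vertex `z`. -/
def IsCode (S : AssocScheme X D) (χ : X → ℂ) : Prop :=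
  χ ∉ S.ESp 0 ∧ ∀ z : X, χ ∉ S.EstarSp z 0

/-- `δ_x(χ) = min { i ≠ 0 : E_i^*(x) χ ≠ 0 }`. -/
def deltaX (S : AssocScheme X D) (x : X) (χ : X → ℂ) : ℕ :=
  sInf {i : ℕ | i ≠ 0 ∧ (S.Estar x i).mulVec χ ≠ 0}

/-- `s_x(χ) = #{ i ≠ 0 : E_i^*(x) χ ≠ 0 }`. -/
def sX (S : AssocScheme X D) (x : X) (χ : X → ℂ) : ℕ :=
  {i : ℕ | i ≠ 0 ∧ (S.Estar x i).mulVec χ ≠ 0}.ncard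

/-- `δ^*(χ) = min { j ≠ 0 : E_j χ ≠ 0 }` (dual distance). -/
def deltaStar (S : AssocScheme X D) (χ : X → ℂ) : ℕ :=
  sInf {j : ℕ | j ≠ 0 ∧ (S.EM j).mulVec χ ≠ 0}

/-- `s^*(χ) = #{ j ≠ 0 : E_j χ ≠ 0 }` (dual degree). -/
def sStar (S : AssocScheme X D) (χ : X → ℂ) : ℕ :=
  {j : ℕ | j ≠ 0 ∧ (S.EM j).mulVec χ ≠ 0}.ncard

/-- `δ(χ) = min { i ≠ 0 : ⟨χ, A_i χ⟩ ≠ 0 }` (minimum distance). -/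
def deltaMin (S : AssocScheme X D) (χ : X → ℂ) : ℕ :=
  sInf {i : ℕ | i ≠ 0 ∧ dotc χ ((S.AM i).mulVec χ) ≠ 0}

/-- `s(χ) = #{ i ≠ 0 : ⟨χ, A_i χ⟩ ≠ 0 }` (degree). -/
def degree (S : AssocScheme X D) (χ : X → ℂ) : ℕ :=
  {i : ℕ | i ≠ 0 ∧ dotc χ ((S.AM i).mulVec χ) ≠ 0}.ncard

/-- `ψ` is a relative `t`-codesign w.r.t. `x`: `E_i^* ψ ∈ ℂ · A_i x̂` for `1 ≤ i ≤ t`. -/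
def RelCodesign (S : AssocScheme X D) (x : X) (t : ℕ) (ψ : X → ℂ) : Prop :=
  ∀ i : ℕ, 1 ≤ i → i ≤ t → ∃ c : ℂ, (S.Estar x i).mulVec ψ = c • (S.AM i).mulVec (xhat x)

/-- `ψ` is a relative `t`-design w.r.t. `x`: `E_j ψ ∈ ℂ · E_j x̂` for `1 ≤ j ≤ t`. -/
def RelDesign (S : AssocScheme X D) (x : X) (t : ℕ) (ψ : X → ℂ) : Prop :=
  ∀ j : ℕ, 1 ≤ j → j ≤ t → ∃ c : ℂ, (S.EM j).mulVec ψ = c • (S.EM j).mulVec (xhat x)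

/-- The Terwilliger algebra `T(x)`, generated by the Bose–Mesner algebra and the
dual Bose–Mesner algebra with respect to `x`. -/
def Talg (S : AssocScheme X D) (x : X) : Subalgebra ℂ (Matrix X X ℂ) :=
  Algebra.adjoin ℂ (Set.range S.A ∪ Set.range fun i : Fin (D + 1) => S.Estar x (i : ℕ))

/-- A `T(x)`-submodule of the standard module. -/
def IsTSub (S : AssocScheme X D) (x : X) (W : Submodule ℂ (X → ℂ)) : Prop :=
  ∀ F ∈ S.Talg x, ∀ v ∈ W, F.mulVec v ∈ W

/-- An irreducible `T(x)`-module inside the standard module. -/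
def IsIrr (S : AssocScheme X D) (x : X) (W : Submodule ℂ (X → ℂ)) : Prop :=
  S.IsTSub x W ∧ W ≠ ⊥ ∧ ∀ W' ≤ W, S.IsTSub x W' → W' = ⊥ ∨ W' = W

/-- The support `W_s = { i : E_i^*(x) W ≠ 0 }` of a module. -/
def supp (S : AssocScheme X D) (x : X) (W : Submodule ℂ (X → ℂ)) : Set ℕ :=
  {i : ℕ | i ≤ D ∧ Submodule.map (S.Estar x i).mulVecLin W ≠ ⊥}

/-- The dual support `W_s^* = { j : E_j W ≠ 0 }` of a module. -/
def dualSupp (S : AssocScheme X D) (W : Submodule ℂ (X → ℂ)) : Set ℕ :=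
  {j : ℕ | j ≤ D ∧ Submodule.map (S.EM j).mulVecLin W ≠ ⊥}

/-- The endpoint `r(W) = min { i : E_i^*(x) W ≠ 0 }`. -/
def endpoint (S : AssocScheme X D) (x : X) (W : Submodule ℂ (X → ℂ)) : ℕ :=
  sInf (S.supp x W)

/-- The dual endpoint `r^*(W) = min { j : E_j W ≠ 0 }`. -/
def dualEndpoint (S : AssocScheme X D) (W : Submodule ℂ (X → ℂ)) : ℕ :=
  sInf (S.dualSupp W)

/-- The diameter `d(W) = |W_s| - 1`. -/
def diam (S : AssocScheme X D) (x : X) (W : Submodule ℂ (X → ℂ)) : ℕ :=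
  (S.supp x W).ncard - 1

/-- The dual diameter `d^*(W) = |W_s^*| - 1`. -/
def dualDiam (S : AssocScheme X D) (W : Submodule ℂ (X → ℂ)) : ℕ :=
  (S.dualSupp W).ncard - 1

/-- `W` is thin: `dim E_i^*(x) W ≤ 1` for all `i`. -/
def IsThin (S : AssocScheme X D) (x : X) (W : Submodule ℂ (X → ℂ)) : Prop :=
  ∀ i : ℕ, Module.finrank ℂ (Submodule.map (S.Estar x i).mulVecLin W) ≤ 1

/-- `W` is dual thin: `dim E_j W ≤ 1` for all `j`. -/
def IsDualThin (S : AssocScheme X D) (W : Submodule ℂ (X → ℂ)) : Prop :=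
  ∀ j : ℕ, Module.finrank ℂ (Submodule.map (S.EM j).mulVecLin W) ≤ 1

/-- The displacement `η(W) = r(W) + r^*(W) + d(W) - D` (as an integer). -/
def disp (S : AssocScheme X D) (x : X) (W : Submodule ℂ (X → ℂ)) : ℤ :=
  (S.endpoint x W : ℤ) + (S.dualEndpoint W : ℤ) + (S.diam x W : ℤ) - (D : ℤ)

/-- `V_0`: the span of the irreducible `T(x)`-modules of displacement zero. -/
def V0 (S : AssocScheme X D) (x : X) : Submodule ℂ (X → ℂ) :=
  ⨆ (W : Submodule ℂ (X → ℂ)) (_ : S.IsIrr x W ∧ S.disp x W = 0), W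

/-- The split-decomposition subspace `V_{ij} = (Σ_{k ≤ i} E_k^* V) ∩ (Σ_{ℓ ≤ j} E_ℓ V)`. -/
def Vij (S : AssocScheme X D) (x : X) (i j : ℕ) : Submodule ℂ (X → ℂ) :=
  (⨆ k ∈ Finset.range (i + 1), S.EstarSp x k) ⊓ (⨆ l ∈ Finset.range (j + 1), S.ESp l)

/-- The primary module `M x̂`. -/
def primary (S : AssocScheme X D) (x : X) : Submodule ℂ (X → ℂ) :=
  Submodule.span ℂ (Set.range fun i : Fin (D + 1) => (S.A i).mulVec (xhat x))

/-- The graph `(X, R_1)` is bipartite. -/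
def IsBipartiteGraph (S : AssocScheme X D) : Prop :=
  ∃ f : X → Bool, ∀ x y : X, S.A 1 x y ≠ 0 → f x ≠ f y

/-- `Y` is a bipartite half: one colour class of a proper 2-colouring of `(X, R_1)`. -/
def IsBipartiteHalf (S : AssocScheme X D) (Y : Finset X) : Prop :=
  ∃ f : X → Bool, (∀ x y : X, S.A 1 x y ≠ 0 → f x ≠ f y) ∧ (Y : Set X) = {x | f x = true}

/-- The scheme is antipodal: `R_0 ∪ R_D` is an equivalence relation. -/
def IsAntipodal (S : AssocScheme X D) : Prop :=
  ∀ x y z : X, y ≠ z → S.AM D x y ≠ 0 → S.AM D x z ≠ 0 → S.AM D y z ≠ 0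

/-- The scheme is an antipodal double cover: antipodal with fibres of size two. -/
def IsAntipodalDoubleCover (S : AssocScheme X D) : Prop :=
  S.IsAntipodal ∧ ∀ x : X, ∃! y : X, S.AM D x y ≠ 0

/-- The scheme is that of an ordinary cycle: the graph `(X, R_1)` has valency two. -/
def IsOrdinaryCycle (S : AssocScheme X D) : Prop :=
  ∀ x : X, {y : X | S.A 1 x y ≠ 0}.ncard = 2

end AssocScheme

section AMaux

open AssocScheme

variable {X : Type*} [Fintype X] [DecidableEq X] {D : ℕ}

private lemma sum_mulVec' {ι : Type*} (s : Finset ι) (M : ι → Matrix X X ℂ) (v : X → ℂ) :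
    (∑ i ∈ s, M i).mulVec v = ∑ i ∈ s, (M i).mulVec v := by
  funext y
  simp [Matrix.mulVec, dotProduct, Matrix.sum_apply, Finset.sum_mul, Finset.sum_apply]
  exact Finset.sum_comm

private lemma mulVec_sumv {ι : Type*} (s : Finset ι) (M : Matrix X X ℂ) (v : ι → X → ℂ) :
    M.mulVec (∑ i ∈ s, v i) = ∑ i ∈ s, M.mulVec (v i) :=
  map_sum M.mulVecLin v s

private lemma adjB (M : Matrix X X ℂ) (hM : M.IsSymm) (u v : X → ℂ) :
    ∑ y, (M.mulVec u) y * v y = ∑ y, u y * (M.mulVec v) y := by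
  have hsym : ∀ a b, M a b = M b a := fun a b => by
    conv_lhs => rw [← hM]
    rfl
  simp only [Matrix.mulVec, dotProduct, Finset.sum_mul, Finset.mul_sum]
  rw [Finset.sum_comm]
  refine Finset.sum_congr rfl fun z _ => Finset.sum_congr rfl fun y _ => ?_
  rw [hsym y z]; ring

namespace AssocScheme

variable (S : AssocScheme X D) (x : X)

lemma AM_of_lt {i : ℕ} (h : i < D + 1) : S.AM i = S.A ⟨i, h⟩ := dif_pos h

lemma AM_of_ge {i : ℕ} (h : ¬ i < D + 1) : S.AM i = 0 := dif_neg h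

lemma AM_symm' (i : ℕ) (y z : X) : S.AM i y z = S.AM i z y := by
  by_cases h : i < D + 1
  · rw [AM_of_lt S h]
    have := S.A_symm ⟨i, h⟩
    conv_lhs => rw [← this]
    rfl
  · rw [AM_of_ge S h]; rfl

lemma AM_entries' (i : ℕ) (y z : X) : S.AM i y z = 0 ∨ S.AM i y z = 1 := by
  by_cases h : i < D + 1
  · rw [AM_of_lt S h]; exact S.A_entries _ y z
  · rw [AM_of_ge S h]; left; rfl

lemma A_sum_apply (y z : X) : ∑ k : Fin (D + 1), S.A k y z = 1 := by
  have := congrFun (congrFun S.A_sum y) z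
  simpa [Matrix.sum_apply] using this

lemma AM_disjoint {i j : ℕ} (hij : i ≠ j) (y z : X) : S.AM i y z * S.AM j y z = 0 := by
  by_cases hi : i < D + 1
  · by_cases hj : j < D + 1
    · rw [AM_of_lt S hi, AM_of_lt S hj]
      rcases S.A_entries ⟨i, hi⟩ y z with h1 | h1
      · rw [h1, zero_mul]
      rcases S.A_entries ⟨j, hj⟩ y z with h2 | h2
      · rw [h2, mul_zero]
      exfalso
      set f : Fin (D + 1) → ℕ := fun k => if S.A k y z = 1 then 1 else 0 with hf
      have hcast : ∀ k, (f k : ℂ) = S.A k y z := by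
        intro k
        rcases S.A_entries k y z with h | h <;> simp [hf, h]
      have hsum : (∑ k, f k : ℂ) = 1 := by
        push_cast [hcast]
        exact S.A_sum_apply y z
      have hsum' : ∑ k, f k = 1 := by exact_mod_cast hsum
      have hne : (⟨i, hi⟩ : Fin (D + 1)) ≠ ⟨j, hj⟩ := by
        simp only [ne_eq, Fin.mk.injEq]; exact hij
      have h2' : f ⟨j, hj⟩ ≤ ∑ k ∈ Finset.univ.erase ⟨i, hi⟩, f k :=
        Finset.single_le_sum (fun k _ => Nat.zero_le _)
          (Finset.mem_erase.mpr ⟨fun h => hne h.symm, Finset.mem_univ _⟩)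
      have h3 : f ⟨i, hi⟩ + ∑ k ∈ Finset.univ.erase ⟨i, hi⟩, f k = ∑ k, f k :=
        Finset.add_sum_erase _ _ (Finset.mem_univ _)
      have hfi : f ⟨i, hi⟩ = 1 := by simp [hf, h1]
      have hfj : f ⟨j, hj⟩ = 1 := by simp [hf, h2]
      omega
    · rw [AM_of_ge S hj, Matrix.zero_apply, mul_zero]
  · rw [AM_of_ge S hi, Matrix.zero_apply, zero_mul]

lemma AM_idem (i : ℕ) (y z : X) : S.AM i y z * S.AM i y z = S.AM i y z := by
  rcases S.AM_entries' i y z with h | h <;> rw [h] <;> ring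

lemma EM_of_lt {j : ℕ} (h : j < D + 1) : S.EM j = S.E ⟨j, h⟩ := dif_pos h

lemma EM_of_ge {j : ℕ} (h : ¬ j < D + 1) : S.EM j = 0 := dif_neg h

lemma EM_coe (j : Fin (D + 1)) : S.EM (j : ℕ) = S.E j := by
  rw [S.EM_of_lt j.isLt]

lemma estar_mulVec (i : ℕ) (v : X → ℂ) (y : X) :
    (S.Estar x i).mulVec v y = S.AM i x y * v y :=
  Matrix.mulVec_diagonal _ _ _

lemma mem_estarSp_iff (i : ℕ) (v : X → ℂ) :
    v ∈ S.EstarSp x i ↔ ∀ y, S.AM i x y = 0 → v y = 0 := by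
  constructor
  · rintro ⟨w, rfl⟩ y hy
    rw [Matrix.mulVecLin_apply, estar_mulVec, hy, zero_mul]
  · intro h
    refine ⟨v, ?_⟩
    funext y
    rw [Matrix.mulVecLin_apply, estar_mulVec]
    rcases S.AM_entries' i x y with h0 | h1
    · rw [h0, zero_mul, h y h0]
    · rw [h1, one_mul]

lemma estar_kill {i k : ℕ} (v : X → ℂ) (hv : v ∈ S.EstarSp x i) (hk : k ≠ i) :
    (S.Estar x k).mulVec v = 0 := by
  funext y
  rw [estar_mulVec, Pi.zero_apply]
  rcases S.AM_entries' k x y with h0 | h1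
  · rw [h0, zero_mul]
  · have hv0 : v y = 0 := by
      refine (S.mem_estarSp_iff x i v).mp hv y ?_
      have := S.AM_disjoint hk x y
      rw [h1, one_mul] at this
      exact this
    rw [hv0, mul_zero]

lemma estar_kill_sup {a b c k : ℕ} (v : X → ℂ)
    (hv : v ∈ S.EstarSp x a ⊔ S.EstarSp x b ⊔ S.EstarSp x c)
    (ha : k ≠ a) (hb : k ≠ b) (hc : k ≠ c) :
    (S.Estar x k).mulVec v = 0 := by
  rcases Submodule.mem_sup.mp hv with ⟨u, hu, w, hw, rfl⟩
  rcases Submodule.mem_sup.mp hu with ⟨u1, hu1, u2, hu2, rfl⟩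
  rw [Matrix.mulVec_add, Matrix.mulVec_add,
    S.estar_kill x u1 hu1 ha, S.estar_kill x u2 hu2 hb, S.estar_kill x w hw hc]
  simp

lemma estar_total : ∑ k : Fin (D + 1), S.Estar x (k : ℕ) = 1 := by
  funext y z
  have hAM : ∀ k : Fin (D + 1), S.AM (k : ℕ) = S.A k := by
    intro k; rw [S.AM_of_lt k.isLt]
  by_cases h : y = z
  · subst h
    simp only [Matrix.sum_apply, Estar, Matrix.diagonal_apply_eq, hAM]
    rw [Matrix.one_apply_eq]
    exact S.A_sum_apply x y
  · simp only [Matrix.sum_apply, Estar, Matrix.diagonal_apply_ne _ h]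
    rw [Matrix.one_apply_ne h]
    simp

lemma estar_decomp (v : X → ℂ) :
    v = ∑ k : Fin (D + 1), (S.Estar x (k : ℕ)).mulVec v := by
  rw [← sum_mulVec', S.estar_total x, Matrix.one_mulVec]

/-- supported on spheres `≤ b` -/
def SSU (b : ℕ) (u : X → ℂ) : Prop := ∀ k : ℕ, b < k → (S.Estar x k).mulVec u = 0

lemma ssu_of_mem {i : ℕ} (v : X → ℂ) (hv : v ∈ S.EstarSp x i) : S.SSU x i v :=
  fun k hk => S.estar_kill x v hv (by omega)

lemma ssu_step (hS : S.IsMetric) {b : ℕ} (u : X → ℂ) (hu : S.SSU x b u) :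
    S.SSU x (b + 1) ((S.A 1).mulVec u) := by
  intro k hk
  conv_lhs => rw [S.estar_decomp x u]
  rw [mulVec_sumv, mulVec_sumv]
  refine Finset.sum_eq_zero fun j _ => ?_
  by_cases hj : (j : ℕ) ≤ b
  · have hmem : (S.Estar x (j : ℕ)).mulVec u ∈ S.EstarSp x (j : ℕ) := ⟨u, rfl⟩
    exact S.estar_kill_sup x _ (hS.2 x (j : ℕ) _ hmem) (by omega) (by omega) (by omega)
  · rw [hu j (by omega), Matrix.mulVec_zero, Matrix.mulVec_zero]

lemma ssu_step' (hS : S.IsMetric) {b : ℕ} (θ : ℂ) (u : X → ℂ) (hu : S.SSU x b u) :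
    S.SSU x (b + 1) ((S.A 1 - θ • 1).mulVec u) := by
  intro k hk
  rw [Matrix.sub_mulVec, Matrix.mulVec_sub, S.ssu_step x hS u hu k hk,
    Matrix.smul_mulVec, Matrix.one_mulVec, Matrix.mulVec_smul, hu k (by omega)]
  simp

/-- the matrix `∏_{m ∈ T} (A₁ - θ m)` written in the idempotent basis -/
def GT (θ : Fin (D + 1) → ℂ) (T : Finset (Fin (D + 1))) : Matrix X X ℂ :=
  ∑ k, (∏ m ∈ T, (θ k - θ m)) • S.E k

lemma mulphi (a b : Fin (D + 1) → ℂ) :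
    (∑ k, a k • S.E k) * (∑ k, b k • S.E k) = ∑ k, (a k * b k) • S.E k := by
  rw [Finset.sum_mul_sum]
  have : ∀ j k : Fin (D + 1), (a j • S.E j) * (b k • S.E k)
      = (a j * b k) • (if j = k then S.E j else 0) := by
    intro j k
    rw [smul_mul_assoc, mul_smul_comm, smul_smul, S.E_idem]
  simp only [this]
  refine Finset.sum_congr rfl fun j _ => ?_
  rw [show (∑ k, (a j * b k) • if j = k then S.E j else 0)
      = ∑ k, if j = k then (a j * b k) • S.E j else 0 from
    Finset.sum_congr rfl fun k _ => by split <;> simp]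
  simp

lemma GT_empty (θ : Fin (D + 1) → ℂ) : S.GT θ ∅ = 1 := by
  simp [GT, S.E_sum]

lemma GT_insert (θ : Fin (D + 1) → ℂ) (hθ : S.A 1 = ∑ k, θ k • S.E k)
    {a : Fin (D + 1)} {T : Finset (Fin (D + 1))} (ha : a ∉ T) :
    S.GT θ (insert a T) = (S.A 1 - θ a • 1) * S.GT θ T := by
  have h1 : S.A 1 - θ a • (1 : Matrix X X ℂ) = ∑ k, (θ k - θ a) • S.E k := by
    rw [hθ, ← S.E_sum, Finset.smul_sum]
    rw [← Finset.sum_sub_distrib]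
    refine Finset.sum_congr rfl fun k _ => ?_
    rw [sub_smul]
  rw [h1, GT, GT, S.mulphi]
  refine Finset.sum_congr rfl fun k _ => ?_
  rw [Finset.prod_insert ha]

lemma E_symm (j : Fin (D + 1)) : (S.E j).IsSymm := by
  obtain ⟨q, hq⟩ := S.E_in_A j
  rw [hq]
  unfold Matrix.IsSymm
  rw [Matrix.transpose_sum]
  refine Finset.sum_congr rfl fun i _ => ?_
  rw [Matrix.transpose_smul, S.A_symm i]

lemma estar_fix {k : ℕ} (v : X → ℂ) (hv : v ∈ S.EstarSp x k) :
    (S.Estar x k).mulVec v = v := by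
  funext y
  rw [estar_mulVec]
  rcases S.AM_entries' k x y with h0 | h1
  · rw [h0, zero_mul, (S.mem_estarSp_iff x k v).mp hv y h0]
  · rw [h1, one_mul]

lemma GT_symm (θ : Fin (D + 1) → ℂ) (T : Finset (Fin (D + 1))) : (S.GT θ T).IsSymm := by
  unfold GT Matrix.IsSymm
  rw [Matrix.transpose_sum]
  refine Finset.sum_congr rfl fun k _ => ?_
  rw [Matrix.transpose_smul, S.E_symm k]

lemma ssu_GT (hS : S.IsMetric) (θ : Fin (D + 1) → ℂ) (hθ : S.A 1 = ∑ k, θ k • S.E k)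
    (T : Finset (Fin (D + 1))) {b : ℕ} (v : X → ℂ) (hv : S.SSU x b v) :
    S.SSU x (b + T.card) ((S.GT θ T).mulVec v) := by
  classical
  induction T using Finset.induction_on with
  | empty => simpa [S.GT_empty] using hv
  | @insert a T ha ih =>
    rw [S.GT_insert θ hθ ha, ← Matrix.mulVec_mulVec]
    have := S.ssu_step' x hS (θ a) _ ih
    rw [Finset.card_insert_of_notMem ha]
    have he : b + (T.card + 1) = b + T.card + 1 := by omega
    rw [he]
    exact this

/-- span of `A_m x̂`, `m ≤ n` -/
def Pn (n : ℕ) : Submodule ℂ (X → ℂ) :=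
  Submodule.span ℂ {w | ∃ m ≤ n, w = (S.AM m).mulVec (xhat x)}

lemma Pn_mono {n n' : ℕ} (h : n ≤ n') : S.Pn x n ≤ S.Pn x n' :=
  Submodule.span_mono fun w ⟨m, hm, e⟩ => ⟨m, le_trans hm h, e⟩

lemma AM_mulVec_xhat (i : ℕ) (y : X) : (S.AM i).mulVec (xhat x) y = S.AM i x y := by
  rw [xhat, Matrix.mulVec_single]
  exact (mul_one _).trans (S.AM_symm' i y x)

lemma AM_mulVec_xhat_mem (m : ℕ) : (S.AM m).mulVec (xhat x) ∈ S.EstarSp x m := by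
  rw [S.mem_estarSp_iff]
  intro y hy
  rw [S.AM_mulVec_xhat, hy]

lemma primary_step (hS : S.IsMetric) (m : ℕ) :
    (S.A 1).mulVec ((S.AM m).mulVec (xhat x)) ∈ S.Pn x (m + 1) := by
  by_cases hm : m < D + 1
  · obtain ⟨p, hp⟩ := S.A_mul_closed 1 ⟨m, hm⟩
    have key : (S.A 1).mulVec ((S.AM m).mulVec (xhat x))
        = ∑ k : Fin (D + 1), p k • (S.AM (k : ℕ)).mulVec (xhat x) := by
      conv_lhs => rw [S.AM_of_lt hm]
      rw [Matrix.mulVec_mulVec, hp, sum_mulVec']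
      refine Finset.sum_congr rfl fun k _ => ?_
      rw [Matrix.smul_mulVec, S.AM_of_lt k.isLt]
    rw [key]
    refine Submodule.sum_mem _ fun k _ => ?_
    by_cases hk : (k : ℕ) ≤ m + 1
    · exact Submodule.smul_mem _ _ (Submodule.subset_span ⟨(k : ℕ), hk, rfl⟩)
    · have hmem := hS.2 x m _ (S.AM_mulVec_xhat_mem x m)
      have h0 : (S.Estar x (k : ℕ)).mulVec ((S.A 1).mulVec ((S.AM m).mulVec (xhat x))) = 0 :=
        S.estar_kill_sup x _ hmem (by omega) (by omega) (by omega)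
      rw [key, mulVec_sumv] at h0
      have hterm : ∀ j : Fin (D + 1), j ∈ Finset.univ → j ≠ k →
          (S.Estar x (k : ℕ)).mulVec (p j • (S.AM (j : ℕ)).mulVec (xhat x)) = 0 := by
        intro j _ hj
        have hne : (k : ℕ) ≠ (j : ℕ) := fun h => hj (Fin.ext h.symm)
        rw [Matrix.mulVec_smul, S.estar_kill x _ (S.AM_mulVec_xhat_mem x (j : ℕ)) hne,
          smul_zero]
      rw [Finset.sum_eq_single k hterm (fun h => absurd (Finset.mem_univ k) h)] at h0
      rw [Matrix.mulVec_smul, S.estar_fix x _ (S.AM_mulVec_xhat_mem x (k : ℕ))] at h0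
      rw [h0]
      exact Submodule.zero_mem _
  · rw [S.AM_of_ge hm, Matrix.zero_mulVec, Matrix.mulVec_zero]
    exact Submodule.zero_mem _

lemma primary_A1 (hS : S.IsMetric) {n : ℕ} (u : X → ℂ) (hu : u ∈ S.Pn x n) :
    (S.A 1).mulVec u ∈ S.Pn x (n + 1) := by
  induction hu using Submodule.span_induction with
  | mem w hw =>
    obtain ⟨m, hm, rfl⟩ := hw
    exact S.Pn_mono x (by omega) (S.primary_step x hS m)
  | zero => rw [Matrix.mulVec_zero]; exact Submodule.zero_mem _
  | add u v _ _ hu hv => rw [Matrix.mulVec_add]; exact Submodule.add_mem _ hu hv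
  | smul c u _ hu => rw [Matrix.mulVec_smul]; exact Submodule.smul_mem _ _ hu

lemma primary_sub (hS : S.IsMetric) {n : ℕ} (θ : ℂ) (u : X → ℂ) (hu : u ∈ S.Pn x n) :
    (S.A 1 - θ • 1).mulVec u ∈ S.Pn x (n + 1) := by
  rw [Matrix.sub_mulVec, Matrix.smul_mulVec, Matrix.one_mulVec]
  exact Submodule.sub_mem _ (S.primary_A1 x hS u hu)
    (S.Pn_mono x (by omega) (Submodule.smul_mem _ _ hu))

lemma primary_GT (hS : S.IsMetric) (θ : Fin (D + 1) → ℂ) (hθ : S.A 1 = ∑ k, θ k • S.E k)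
    (T : Finset (Fin (D + 1))) :
    (S.GT θ T).mulVec (xhat x) ∈ S.Pn x T.card := by
  classical
  induction T using Finset.induction_on with
  | empty =>
    rw [S.GT_empty, Matrix.one_mulVec]
    refine Submodule.subset_span ⟨0, le_refl _, ?_⟩
    have h1 : S.AM 0 = 1 := by
      rw [S.AM_of_lt (Nat.succ_pos D)]
      have he : (⟨0, Nat.succ_pos D⟩ : Fin (D + 1)) = 0 := rfl
      rw [he, S.A_zero]
    rw [h1, Matrix.one_mulVec]
  | @insert a T ha ih =>
    rw [S.GT_insert θ hθ ha, ← Matrix.mulVec_mulVec, Finset.card_insert_of_notMem ha]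
    exact S.primary_sub x hS (θ a) _ ih

lemma A1_pow (θ : Fin (D + 1) → ℂ) (hθ : S.A 1 = ∑ k, θ k • S.E k) (n : ℕ) :
    S.A 1 ^ n = ∑ k, (θ k ^ n) • S.E k := by
  induction n with
  | zero => simp [S.E_sum]
  | succ n ih =>
    rw [pow_succ, ih, hθ, S.mulphi]
    refine Finset.sum_congr rfl fun k _ => ?_
    rw [pow_succ]

lemma aeval_A1 (θ : Fin (D + 1) → ℂ) (hθ : S.A 1 = ∑ k, θ k • S.E k) (g : Polynomial ℂ) :
    Polynomial.aeval (S.A 1) g = ∑ k, (g.eval (θ k)) • S.E k := by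
  induction g using Polynomial.induction_on' with
  | add p q hp hq =>
    rw [map_add, hp, hq, ← Finset.sum_add_distrib]
    refine Finset.sum_congr rfl fun k _ => ?_
    rw [Polynomial.eval_add, add_smul]
  | monomial n c =>
    rw [Polynomial.aeval_monomial, S.A1_pow θ hθ n, Algebra.algebraMap_eq_smul_one,
      smul_mul_assoc, one_mul, Finset.smul_sum]
    refine Finset.sum_congr rfl fun k _ => ?_
    rw [Polynomial.eval_monomial, smul_smul]

lemma eig_distinct (hS : S.IsMetric) (θ : Fin (D + 1) → ℂ)
    (hθ : S.A 1 = ∑ k, θ k • S.E k) {j m : Fin (D + 1)}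
    (hj : S.E j ≠ 0) (hm : S.E m ≠ 0) (hjm : j ≠ m) : θ j ≠ θ m := by
  have hEj : S.E j ∈ Algebra.adjoin ℂ {S.A 1} := by
    obtain ⟨q, hq⟩ := S.E_in_A j
    rw [hq]
    exact Subalgebra.sum_mem _ fun i _ => Subalgebra.smul_mem _ (hS.1 i) _
  rw [Algebra.adjoin_singleton_eq_range_aeval] at hEj
  obtain ⟨g, hg⟩ := hEj
  have hrep : S.E j = ∑ k, (g.eval (θ k)) • S.E k := by
    rw [← hg]; exact S.aeval_A1 θ hθ g
  have hmul : ∀ i : Fin (D + 1),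
      (∑ k, (g.eval (θ k)) • S.E k) * S.E i = (g.eval (θ i)) • S.E i := by
    intro i
    rw [Finset.sum_mul]
    rw [Finset.sum_eq_single i (fun k _ hk => by
      rw [smul_mul_assoc, S.E_idem, if_neg hk, smul_zero])
      (fun h => absurd (Finset.mem_univ i) h)]
    rw [smul_mul_assoc, S.E_idem, if_pos rfl]
  have hmulj := hmul j
  rw [← hrep, S.E_idem, if_pos rfl] at hmulj
  have hj1 : g.eval (θ j) = 1 := by
    by_contra hne
    have hz : (g.eval (θ j) - 1) • S.E j = 0 := by
      rw [sub_smul, one_smul]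
      conv_lhs => rw [← hmulj]
      rw [sub_self]
    rcases smul_eq_zero.mp hz with h | h
    · exact hne (by linear_combination h)
    · exact hj h
  have hmulm := hmul m
  rw [← hrep, S.E_idem, if_neg hjm] at hmulm
  have hm0 : g.eval (θ m) = 0 := by
    by_contra hne
    exact hm ((smul_eq_zero.mp hmulm.symm).resolve_left hne)
  intro heq
  rw [heq, hm0] at hj1
  exact one_ne_zero hj1.symm

end AssocScheme

end AMaux

open AssocScheme in
/-- **Assmus–Mattson, version 1.** In a metric symmetric association scheme,
if `χ` is a code with `δ_x = δ_x(χ)` and `s^* = s^*(χ)`, then for every `0 ≤ ℓ ≤ D` the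
vector `A_ℓ χ` is a relative `(δ_x - s^*)`-codesign with respect to `x`: each `E_i^* A_ℓ χ`
with `1 ≤ i ≤ δ_x - s^*` is a scalar multiple of `A_i x̂`. -/
theorem assmus_mattson_v1
    {X : Type*} [Fintype X] [DecidableEq X] {D : ℕ}
    (S : AssocScheme X D) (hS : S.IsMetric) (x : X)
    (χ : X → ℂ) (hχ : S.IsCode χ) :
    ∀ l : Fin (D + 1),
      S.RelCodesign x (S.deltaX x χ - S.sStar χ) ((S.A l).mulVec χ) := by
  classical
  intro l i hi1 hit
  obtain ⟨θ, hθ⟩ := S.A_in_E 1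
  set δ := S.deltaX x χ with hδdef
  set s := S.sStar χ with hsdef
  set Γ : Finset (Fin (D + 1)) :=
    Finset.univ.filter (fun j => j ≠ 0 ∧ (S.E j).mulVec χ ≠ 0) with hΓdef
  have hcard : s = Γ.card := by
    rw [hsdef, sStar]
    have hset : {j : ℕ | j ≠ 0 ∧ (S.EM j).mulVec χ ≠ 0}
        = (fun j : Fin (D + 1) => (j : ℕ)) '' (Γ : Set (Fin (D + 1))) := by
      ext j
      simp only [Set.mem_setOf_eq, Set.mem_image, Finset.mem_coe, hΓdef,
        Finset.mem_filter, Finset.mem_univ, true_and]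
      constructor
      · rintro ⟨hj0, hjχ⟩
        have hlt : j < D + 1 := by
          by_contra h
          rw [S.EM_of_ge h, Matrix.zero_mulVec] at hjχ
          exact hjχ rfl
        refine ⟨⟨j, hlt⟩, ⟨?_, ?_⟩, rfl⟩
        · intro h0
          exact hj0 (congrArg Fin.val h0)
        · rwa [S.EM_of_lt hlt] at hjχ
      · rintro ⟨k, ⟨hk0, hkχ⟩, rfl⟩
        refine ⟨fun h => hk0 (Fin.ext h), ?_⟩
        rwa [S.EM_coe]
    rw [hset, Set.ncard_image_of_injective _ Fin.val_injective, Set.ncard_coe_finset]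
  have hδne : δ ≠ 0 ∧ (S.Estar x δ).mulVec χ ≠ 0 := by
    have hne : {k : ℕ | k ≠ 0 ∧ (S.Estar x k).mulVec χ ≠ 0}.Nonempty := by
      by_contra h
      rw [Set.not_nonempty_iff_eq_empty] at h
      have hd0 : δ = 0 := by rw [hδdef, deltaX, h, Nat.sInf_empty]
      omega
    exact Nat.sInf_mem hne
  have hlow : ∀ k : ℕ, k ≠ 0 → k < δ → (S.Estar x k).mulVec χ = 0 := by
    intro k hk0 hkδ
    by_contra h
    have hle : δ ≤ k := Nat.sInf_le ⟨hk0, h⟩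
    omega
  -- the vector `a = A_i x̂`
  -- E₀ kills test vectors
  have hE0v : ∀ v : X → ℂ, (∀ y, S.AM i x y = 0 → v y = 0) →
      (∑ y, v y * ((S.AM i).mulVec (xhat x)) y) = 0 → (S.E 0).mulVec v = 0 := by
    intro v hsupp hva
    have hsum : ∑ z, v z = 0 := by
      rw [← hva]
      refine Finset.sum_congr rfl fun z _ => ?_
      rcases S.AM_entries' i x z with h0 | h1
      · rw [hsupp z h0, S.AM_mulVec_xhat, h0, mul_zero]
      · rw [S.AM_mulVec_xhat, h1, mul_one]
    funext y
    rw [S.E_zero, Matrix.smul_mulVec, Pi.smul_apply]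
    have hJ : (Matrix.of fun _ _ => (1 : ℂ)).mulVec v y = ∑ z, v z := by
      simp [Matrix.mulVec, dotProduct]
    rw [hJ, hsum, smul_zero, Pi.zero_apply]
  -- membership of test vectors
  have hv_mem : ∀ v : X → ℂ, (∀ y, S.AM i x y = 0 → v y = 0) → v ∈ S.EstarSp x i :=
    fun v hv => (S.mem_estarSp_iff x i v).mpr hv
  -- orthogonality against the primary module
  have horthPn : ∀ v : X → ℂ, (∀ y, S.AM i x y = 0 → v y = 0) →
      (∑ y, v y * ((S.AM i).mulVec (xhat x)) y) = 0 →
      ∀ n : ℕ, ∀ p ∈ S.Pn x n, ∑ y, v y * p y = 0 := by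
    intro v hsupp horth n p hp
    induction hp using Submodule.span_induction with
    | mem w hw =>
      obtain ⟨m, hm, rfl⟩ := hw
      by_cases hmi : m = i
      · subst hmi; exact horth
      · refine Finset.sum_eq_zero fun y _ => ?_
        rcases S.AM_entries' i x y with h0 | h1
        · rw [hsupp y h0, zero_mul]
        · have hd := S.AM_disjoint hmi x y
          rw [h1, mul_one] at hd
          rw [S.AM_mulVec_xhat, hd, mul_zero]
    | zero => simp
    | add p q _ _ hp hq =>
      rw [show ∑ y, v y * (p + q) y = (∑ y, v y * p y) + ∑ y, v y * q y from by
        rw [← Finset.sum_add_distrib]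
        exact Finset.sum_congr rfl fun y _ => by rw [Pi.add_apply, mul_add]]
      rw [hp, hq, add_zero]
    | smul c p _ hp =>
      rw [show ∑ y, v y * (c • p) y = c * ∑ y, v y * p y from by
        rw [Finset.mul_sum]
        exact Finset.sum_congr rfl fun y _ => by rw [Pi.smul_apply, smul_eq_mul]; ring]
      rw [hp, mul_zero]
  -- swapping sums
  have hswap : ∀ (q : Fin (D + 1) → ℂ) (v w : X → ℂ),
      ∑ y, v y * ((∑ k, q k • S.E k).mulVec w) y
        = ∑ k, q k * ∑ y, v y * ((S.E k).mulVec w) y := by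
    intro q v w
    rw [sum_mulVec']
    have h1 : ∀ y, ((∑ k, (q k • S.E k).mulVec w) y) = ∑ k, q k * ((S.E k).mulVec w) y := by
      intro y
      rw [Finset.sum_apply]
      exact Finset.sum_congr rfl fun k _ => by
        rw [Matrix.smul_mulVec, Pi.smul_apply, smul_eq_mul]
    calc ∑ y, v y * (∑ k, (q k • S.E k).mulVec w) y
        = ∑ y, ∑ k, q k * (v y * ((S.E k).mulVec w) y) := by
          refine Finset.sum_congr rfl fun y _ => ?_
          rw [h1, Finset.mul_sum]
          exact Finset.sum_congr rfl fun k _ => by ring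
      _ = ∑ k, ∑ y, q k * (v y * ((S.E k).mulVec w) y) := Finset.sum_comm
      _ = ∑ k, q k * ∑ y, v y * ((S.E k).mulVec w) y := by
          refine Finset.sum_congr rfl fun k _ => ?_
          rw [Finset.mul_sum]
  -- the `E₀` term vanishes
  have hB0 : ∀ v : X → ℂ, (∀ y, S.AM i x y = 0 → v y = 0) →
      (∑ y, v y * ((S.AM i).mulVec (xhat x)) y) = 0 →
      ∑ y, v y * ((S.E 0).mulVec χ) y = 0 := by
    intro v hsupp horth
    rw [← adjB (S.E 0) (S.E_symm 0) v χ, hE0v v hsupp horth]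
    simp
  -- terms outside the dual support vanish
  have hEk0 : ∀ k : Fin (D + 1), k ≠ 0 → k ∉ Γ → (S.E k).mulVec χ = 0 := by
    intro k hk0 hkΓ
    by_contra h
    exact hkΓ (Finset.mem_filter.mpr ⟨Finset.mem_univ _, hk0, h⟩)
  -- the core claim
  have hcore : ∀ v : X → ℂ, (∀ y, S.AM i x y = 0 → v y = 0) →
      (∑ y, v y * ((S.AM i).mulVec (xhat x)) y) = 0 →
      ∀ j ∈ Γ, ∑ y, v y * ((S.E j).mulVec χ) y = 0 := by
    intro v hsupp horth j hj
    obtain ⟨hj0, hjχ⟩ := (Finset.mem_filter.mp hj).2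
    set T := Γ.erase j with hT
    have hcT : T.card = Γ.card - 1 := by rw [hT]; exact Finset.card_erase_of_mem hj
    have hΓpos : 1 ≤ Γ.card := Finset.card_pos.mpr ⟨j, hj⟩
    set c := ∏ m ∈ T, (θ j - θ m) with hc
    have hcne : c ≠ 0 := by
      rw [hc]
      refine Finset.prod_ne_zero_iff.mpr fun m hm => ?_
      obtain ⟨hm0, hmχ⟩ := (Finset.mem_filter.mp (Finset.mem_of_mem_erase hm)).2
      have hjm : j ≠ m := fun h => (Finset.mem_erase.mp hm).1 h.symm
      refine sub_ne_zero.mpr (S.eig_distinct hS θ hθ ?_ ?_ hjm)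
      · intro h; rw [h, Matrix.zero_mulVec] at hjχ; exact hjχ rfl
      · intro h; rw [h, Matrix.zero_mulVec] at hmχ; exact hmχ rfl
    have hstep1 : ∑ y, v y * ((S.GT θ T).mulVec χ) y
        = c * ∑ y, v y * ((S.E j).mulVec χ) y := by
      have hside : ∀ k : Fin (D + 1), k ≠ j →
          (∏ m ∈ T, (θ k - θ m)) * ∑ y, v y * ((S.E k).mulVec χ) y = 0 := by
        intro k hk
        by_cases hk0 : k = 0
        · subst hk0
          rw [hB0 v hsupp horth, mul_zero]
        · by_cases hkΓ : k ∈ Γ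
          · have hkT : k ∈ T := Finset.mem_erase.mpr ⟨hk, hkΓ⟩
            rw [Finset.prod_eq_zero hkT (sub_self (θ k)), zero_mul]
          · rw [hEk0 k hk0 hkΓ]
            simp
      rw [show S.GT θ T = ∑ k, (∏ m ∈ T, (θ k - θ m)) • S.E k from rfl]
      rw [hswap]
      rw [Finset.sum_eq_single j (fun k _ hk => hside k hk)
        (fun h => absurd (Finset.mem_univ j) h), hc]
    have hu : S.SSU x (i + T.card) ((S.GT θ T).mulVec v) :=
      S.ssu_GT x hS θ hθ T v (S.ssu_of_mem x v (hv_mem v hsupp))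
    have hbound : i + T.card < δ := by omega
    have hzero : ∑ y, ((S.GT θ T).mulVec v) y * χ y = 0 := by
      have hterm : ∀ k : Fin (D + 1),
          ∑ y, ((S.Estar x (k : ℕ)).mulVec ((S.GT θ T).mulVec v)) y * χ y = 0 := by
        intro k
        by_cases hk0 : (k : ℕ) = 0
        · rw [hk0]
        -- `E₀* u` pairs only at the base vertex
          have hAM0 : S.AM 0 = 1 := by
            rw [S.AM_of_lt (Nat.succ_pos D)]
            have he : (⟨0, Nat.succ_pos D⟩ : Fin (D + 1)) = 0 := rfl
            rw [he, S.A_zero]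
          have hsum : ∑ y, ((S.Estar x 0).mulVec ((S.GT θ T).mulVec v)) y * χ y
              = ((S.GT θ T).mulVec v) x * χ x := by
            rw [Finset.sum_eq_single x (fun b _ hb => ?_) (fun h => absurd (Finset.mem_univ x) h)]
            · rw [S.estar_mulVec, hAM0, Matrix.one_apply_eq, one_mul]
            · rw [S.estar_mulVec, hAM0, Matrix.one_apply_ne (Ne.symm hb), zero_mul, zero_mul]
          have hux : ((S.GT θ T).mulVec v) x = 0 := by
            have h1 : ∑ y, ((S.GT θ T).mulVec v) y * (xhat x) y = ((S.GT θ T).mulVec v) x := by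
              rw [Finset.sum_eq_single x (fun b _ hb => ?_) (fun h => absurd (Finset.mem_univ x) h)]
              · rw [xhat, Pi.single_eq_same, mul_one]
              · rw [xhat, Pi.single_eq_of_ne hb, mul_zero]
            rw [← h1, adjB _ (S.GT_symm θ T) v (xhat x)]
            exact horthPn v hsupp horth T.card _ (S.primary_GT x hS θ hθ T)
          rw [hsum, hux, zero_mul]
        · by_cases hk2 : (k : ℕ) ≤ i + T.card
          · have hsw : ∑ y, ((S.Estar x (k : ℕ)).mulVec ((S.GT θ T).mulVec v)) y * χ y
                = ∑ y, ((S.GT θ T).mulVec v) y * ((S.Estar x (k : ℕ)).mulVec χ) y := by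
              refine Finset.sum_congr rfl fun y _ => ?_
              rw [S.estar_mulVec, S.estar_mulVec]
              ring
            rw [hsw, hlow (k : ℕ) hk0 (by omega)]
            simp
          · rw [hu (k : ℕ) (by omega)]
            simp
      have hdec : ∀ y : X, ((S.GT θ T).mulVec v) y
          = ∑ k : Fin (D + 1), ((S.Estar x (k : ℕ)).mulVec ((S.GT θ T).mulVec v)) y := by
        intro y
        conv_lhs => rw [S.estar_decomp x ((S.GT θ T).mulVec v)]
        rw [Finset.sum_apply]
      calc ∑ y, ((S.GT θ T).mulVec v) y * χ y
          = ∑ y, ∑ k : Fin (D + 1),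
              ((S.Estar x (k : ℕ)).mulVec ((S.GT θ T).mulVec v)) y * χ y := by
            refine Finset.sum_congr rfl fun y _ => ?_
            rw [hdec y, Finset.sum_mul]
        _ = ∑ k : Fin (D + 1), ∑ y,
              ((S.Estar x (k : ℕ)).mulVec ((S.GT θ T).mulVec v)) y * χ y := Finset.sum_comm
        _ = 0 := Finset.sum_eq_zero fun k _ => hterm k
    have hfinal : c * ∑ y, v y * ((S.E j).mulVec χ) y = 0 := by
      rw [← hstep1, ← adjB _ (S.GT_symm θ T) v χ]
      exact hzero
    exact (mul_eq_zero.mp hfinal).resolve_left hcne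
  -- the key orthogonality
  have key : ∀ v : X → ℂ, (∀ y, S.AM i x y = 0 → v y = 0) →
      (∑ y, v y * ((S.AM i).mulVec (xhat x)) y) = 0 →
      ∑ y, v y * (((S.A l).mulVec χ)) y = 0 := by
    intro v hsupp horth
    obtain ⟨q, hq⟩ := S.A_in_E l
    rw [hq, hswap]
    refine Finset.sum_eq_zero fun k _ => ?_
    by_cases hk0 : k = 0
    · subst hk0; rw [hB0 v hsupp horth, mul_zero]
    · by_cases hkΓ : k ∈ Γ
      · rw [hcore v hsupp horth k hkΓ, mul_zero]
      · rw [hEk0 k hk0 hkΓ]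
        simp
  -- construct the scalar
  by_cases hA : ∀ y, S.AM i x y = 0
  · refine ⟨0, ?_⟩
    funext y
    rw [S.estar_mulVec, hA y, zero_mul, zero_smul, Pi.zero_apply]
  · push_neg at hA
    obtain ⟨y0, hy0⟩ := hA
    have hy0' : S.AM i x y0 = 1 := (S.AM_entries' i x y0).resolve_left hy0
    refine ⟨((S.A l).mulVec χ) y0, ?_⟩
    funext y
    rw [S.estar_mulVec, Pi.smul_apply, S.AM_mulVec_xhat, smul_eq_mul]
    rcases S.AM_entries' i x y with h0 | h1
    · rw [h0, zero_mul, mul_zero]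
    · rw [h1, one_mul, mul_one]
      -- show `(A_l χ) y = (A_l χ) y0` using the test vector `e_y - e_{y0}`
      set v : X → ℂ := fun y' => (if y' = y then (1 : ℂ) else 0) - (if y' = y0 then 1 else 0)
        with hv
      have hpick : ∀ (w : X → ℂ) (b : X), ∑ y', (if y' = b then (1 : ℂ) else 0) * w y' = w b := by
        intro w b
        rw [Finset.sum_eq_single b (fun c _ hc => ?_) (fun h => absurd (Finset.mem_univ b) h)]
        · rw [if_pos rfl, one_mul]
        · rw [if_neg hc, zero_mul]
      have hvsum : ∀ w : X → ℂ, ∑ y', v y' * w y' = w y - w y0 := by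
        intro w
        rw [show ∑ y', v y' * w y'
            = (∑ y', (if y' = y then (1 : ℂ) else 0) * w y')
              - ∑ y', (if y' = y0 then (1 : ℂ) else 0) * w y' from by
          rw [← Finset.sum_sub_distrib]
          exact Finset.sum_congr rfl fun y' _ => by simp only [hv]; ring]
        rw [hpick, hpick]
      have hsupp : ∀ y', S.AM i x y' = 0 → v y' = 0 := by
        intro y' hy'
        simp only [hv]
        have h1 : y' ≠ y := fun h => by rw [h, h1] at hy'; exact one_ne_zero hy'
        have h2 : y' ≠ y0 := fun h => by rw [h, hy0'] at hy'; exact one_ne_zero hy'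
        rw [if_neg h1, if_neg h2, sub_zero]
      have horth : ∑ y', v y' * ((S.AM i).mulVec (xhat x)) y' = 0 := by
        rw [hvsum, S.AM_mulVec_xhat, S.AM_mulVec_xhat, h1, hy0', sub_self]
      have hkey := key v hsupp horth
      rw [hvsum] at hkey
      linear_combination hkey
end
end

section
/- With the setup of a cometric symmetric association scheme (E_1 generates the dual Bose–Mesner algebra M^*(x) and A_1^*(x) E_j V ⊆ E_{j−1}V + E_jV + E_{j+1}V for all j): let χ be a code, set δ^* = min{j ≠ 0 : E_jχ ≠ 0} and s_x = #{i ≠ 0 : E_i^*χ ≠ 0}. Then for every 0 ≤ k ≤ D and every 1 ≤ j ≤ δ^* − s_x, the vector E_j E_k^*χ is a scalar multiple of E_j x̂; i.e., E_k^*χ is a relative (δ^* − s_x)-design with respect to x (Delsarte's Assmus–Mattson theorem). -/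
open Matrix

noncomputable section

namespace AMproof

open Matrix Polynomial AssocScheme

variable {X : Type*} [Fintype X] [DecidableEq X] {D : ℕ}

lemma sum_mulVec' {ι : Type*} (s : Finset ι) (M : ι → Matrix X X ℂ) (v : X → ℂ) :
    (∑ i ∈ s, M i) *ᵥ v = ∑ i ∈ s, (M i) *ᵥ v := by
  funext y
  simp [Matrix.mulVec, dotProduct, Matrix.sum_apply, Finset.sum_mul]
  rw [Finset.sum_comm]

lemma sum_A_apply (S : AssocScheme X D) (x y : X) : ∑ i, S.A i x y = 1 := by
  have := congrFun (congrFun S.A_sum x) y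
  simpa [Matrix.sum_apply] using this

lemma sphere_unique (S : AssocScheme X D) {x y : X} {i i' : Fin (D + 1)}
    (h1 : S.A i x y = 1) (h2 : S.A i' x y = 1) : i = i' := by
  by_contra hne
  have hre : ∀ m : Fin (D + 1), 0 ≤ (S.A m x y).re := by
    intro m
    rcases S.A_entries m x y with h | h <;> simp [h]
  have hsum : ∑ m, (S.A m x y).re = 1 := by
    have := congrArg Complex.re (sum_A_apply S x y)
    simpa [Complex.re_sum] using this
  have hsub : ({i, i'} : Finset (Fin (D + 1))) ⊆ Finset.univ := Finset.subset_univ _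
  have h2le := Finset.sum_le_sum_of_subset_of_nonneg hsub (fun m _ _ => hre m)
  rw [Finset.sum_pair hne, hsum] at h2le
  simp [h1, h2] at h2le
  norm_num at h2le

lemma sphere_exists (S : AssocScheme X D) (x y : X) : ∃ i, S.A i x y = 1 := by
  by_contra h
  push_neg at h
  have h0 : ∀ i, S.A i x y = 0 := fun i => (S.A_entries i x y).resolve_right (h i)
  have := sum_A_apply S x y
  simp [h0] at this

lemma A_apply_ne (S : AssocScheme X D) {x y : X} {i i' : Fin (D + 1)}
    (h1 : S.A i x y = 1) (hne : i' ≠ i) : S.A i' x y = 0 := by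
  rcases S.A_entries i' x y with h | h
  · exact h
  · exact absurd (sphere_unique S h h1) hne

lemma A_zero_apply (S : AssocScheme X D) (x y : X) :
    S.A 0 x y = if x = y then 1 else 0 := by
  rw [S.A_zero, Matrix.one_apply]

lemma aeval_diagonal (d : X → ℂ) (p : ℂ[X]) :
    Polynomial.aeval (Matrix.diagonal d) p = Matrix.diagonal (fun y => p.eval (d y)) := by
  have h1 : Matrix.diagonal d = Matrix.diagonalAlgHom ℂ d := rfl
  rw [h1, Polynomial.aeval_algHom_apply]
  have h2 : (Polynomial.aeval d) p = fun y => p.eval (d y) := by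
    funext y
    have := Polynomial.aeval_algHom_apply (Pi.evalAlgHom ℂ (fun _ : X => ℂ) y) d p
    simpa using this.symm
  rw [h2]
  rfl

lemma EM_mul_EM (S : AssocScheme X D) {j m : ℕ} (hj : j < D + 1) (hne : m ≠ j) :
    S.EM j * S.EM m = 0 := by
  by_cases hm : m < D + 1
  · simp only [EM]
    rw [dif_pos hj, dif_pos hm, S.E_idem]
    rw [if_neg]
    intro h
    exact hne (by simpa using congrArg Fin.val h.symm)
  · simp only [EM]
    rw [dif_neg hm, mul_zero]

lemma EM_kills (S : AssocScheme X D) {j : ℕ} (hj : j < D + 1) {m : ℕ} (hne : m ≠ j)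
    {v : X → ℂ} (hv : v ∈ S.ESp m) : (S.EM j) *ᵥ v = 0 := by
  obtain ⟨w, rfl⟩ := hv
  rw [Matrix.mulVecLin_apply, Matrix.mulVec_mulVec, EM_mul_EM S hj hne, Matrix.zero_mulVec]

lemma biSup_kills (S : AssocScheme X D) {j : ℕ} (hj : j < D + 1) (t : Finset ℕ)
    (h : ∀ m ∈ t, m ≠ j) {v : X → ℂ} (hv : v ∈ ⨆ m ∈ t, S.ESp m) :
    (S.EM j) *ᵥ v = 0 := by
  have hle : (⨆ m ∈ t, S.ESp m) ≤ LinearMap.ker (S.EM j).mulVecLin := by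
    refine iSup₂_le fun m hm => fun w hw => ?_
    simp only [LinearMap.mem_ker, Matrix.mulVecLin_apply]
    exact EM_kills S hj (h m hm) hw
  have := hle hv
  simpa [LinearMap.mem_ker, Matrix.mulVecLin_apply] using this

lemma pow_mulVec_mem (S : AssocScheme X D) (hS : S.IsCometric) (x : X) (n : ℕ) :
    ∀ (l : ℕ) (v : X → ℂ), v ∈ S.ESp l →
      ((S.Astar x 1) ^ n) *ᵥ v ∈ ⨆ m ∈ Finset.Icc (l - n) (l + n), S.ESp m := by
  induction n with
  | zero =>
    intro l v hv
    rw [pow_zero, Matrix.one_mulVec]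
    exact Submodule.mem_iSup_of_mem l (Submodule.mem_iSup_of_mem (by simp) hv)
  | succ n ih =>
    intro l v hv
    have hstep : (⨆ m ∈ Finset.Icc (l - n) (l + n), S.ESp m) ≤
        Submodule.comap (S.Astar x 1).mulVecLin
          (⨆ m ∈ Finset.Icc (l - (n + 1)) (l + (n + 1)), S.ESp m) := by
      refine iSup₂_le fun m hm => fun w hw => ?_
      simp only [Submodule.mem_comap, Matrix.mulVecLin_apply]
      have hmem := hS.2 x m w hw
      simp only [Finset.mem_Icc] at hm
      have h3 : S.ESp (m - 1) ⊔ S.ESp m ⊔ S.ESp (m + 1) ≤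
          ⨆ m' ∈ Finset.Icc (l - (n + 1)) (l + (n + 1)), S.ESp m' := by
        refine sup_le (sup_le ?_ ?_) ?_ <;>
          exact le_iSup₂_of_le _ (by simp only [Finset.mem_Icc]; omega) le_rfl
      exact h3 hmem
    have hv' := ih l v hv
    have := hstep hv'
    simp only [Submodule.mem_comap, Matrix.mulVecLin_apply] at this
    rw [pow_succ']
    rw [← Matrix.mulVec_mulVec]
    exact this

lemma poly_mulVec_mem (S : AssocScheme X D) (hS : S.IsCometric) (x : X) (f : ℂ[X]) {n : ℕ}
    (hf : f.natDegree ≤ n) {l : ℕ} {v : X → ℂ} (hv : v ∈ S.ESp l) :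
    (Polynomial.aeval (S.Astar x 1) f) *ᵥ v ∈ ⨆ m ∈ Finset.Icc (l - n) (l + n), S.ESp m := by
  rw [Polynomial.aeval_eq_sum_range' (Nat.lt_succ_of_le hf), sum_mulVec']
  refine Submodule.sum_mem _ fun d hd => ?_
  rw [Finset.mem_range, Nat.lt_succ_iff] at hd
  rw [Matrix.smul_mulVec]
  refine Submodule.smul_mem _ _ ?_
  have hsub : (⨆ m ∈ Finset.Icc (l - d) (l + d), S.ESp m) ≤
      ⨆ m ∈ Finset.Icc (l - n) (l + n), S.ESp m := by
    refine iSup₂_le fun m hm => ?_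
    simp only [Finset.mem_Icc] at hm
    exact le_iSup₂_of_le m (by simp only [Finset.mem_Icc]; omega) le_rfl
  exact hsub (pow_mulVec_mem S hS x d l v hv)

lemma mulVec_sum' {ι : Type*} (s : Finset ι) (M : Matrix X X ℂ) (v : ι → X → ℂ) :
    M *ᵥ (∑ i ∈ s, v i) = ∑ i ∈ s, M *ᵥ v i := by
  funext y
  simp [Matrix.mulVec, dotProduct, Finset.sum_apply, Finset.mul_sum]
  rw [Finset.sum_comm]

end AMproof


open AssocScheme in
/-- **Assmus–Mattson, version 2; Delsarte.** In a cometric symmetric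
association scheme, if `χ` is a code with `δ^* = δ^*(χ)` and `s_x = s_x(χ)`, then for every
`0 ≤ k ≤ D` the vector `E_k^* χ` is a relative `(δ^* - s_x)`-design with respect to `x`:
each `E_j E_k^* χ` with `1 ≤ j ≤ δ^* - s_x` is a scalar multiple of `E_j x̂`. -/
theorem assmus_mattson_v2
    {X : Type*} [Fintype X] [DecidableEq X] {D : ℕ}
    (S : AssocScheme X D) (hS : S.IsCometric) (x : X)
    (χ : X → ℂ) (hχ : S.IsCode χ) :
    ∀ k : ℕ, k ≤ D →
      S.RelDesign x (S.deltaStar χ - S.sX x χ) ((S.Estar x k).mulVec χ) := by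
  classical
  intro k hk j hj1 hj2
  have hδeq : S.deltaStar χ = sInf {m : ℕ | m ≠ 0 ∧ (S.EM m).mulVec χ ≠ 0} := rfl
  have hδpos : 1 ≤ S.deltaStar χ := le_trans hj1 (le_trans hj2 (Nat.sub_le _ _))
  have hTne : {m : ℕ | m ≠ 0 ∧ (S.EM m).mulVec χ ≠ 0}.Nonempty := by
    by_contra h
    rw [Set.not_nonempty_iff_eq_empty] at h
    rw [hδeq, h, Nat.sInf_empty] at hδpos
    omega
  have hδmem : S.deltaStar χ ∈ {m : ℕ | m ≠ 0 ∧ (S.EM m).mulVec χ ≠ 0} := by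
    rw [hδeq]; exact Nat.sInf_mem hTne
  have hδD : S.deltaStar χ ≤ D := by
    by_contra h
    have h0 : S.EM (S.deltaStar χ) = 0 := by rw [AssocScheme.EM, dif_neg (by omega)]
    exact hδmem.2 (by rw [h0, Matrix.zero_mulVec])
  have hjs : j + S.sX x χ ≤ S.deltaStar χ := by omega
  have hjD : j < D + 1 := by omega
  set jF : Fin (D + 1) := ⟨j, hjD⟩ with hjF
  have hEMj : S.EM j = S.E jF := by rw [AssocScheme.EM, dif_pos hjD]
  by_cases hk0 : k = 0
  · -- k = 0 : E_0^* χ = χ x • xhat x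
    subst hk0
    refine ⟨χ x, ?_⟩
    have h1 : (S.Estar x 0).mulVec χ = χ x • xhat x := by
      funext y
      simp only [AssocScheme.Estar, Matrix.mulVec_diagonal, AssocScheme.AM,
        dif_pos (Nat.succ_pos D), Pi.smul_apply, smul_eq_mul]
      have h0 : S.A ⟨0, Nat.succ_pos D⟩ x y = if x = y then 1 else 0 := by
        have : (⟨0, Nat.succ_pos D⟩ : Fin (D + 1)) = 0 := rfl
        rw [this, AMproof.A_zero_apply]
      rw [h0, xhat, Pi.single_apply]
      by_cases hxy : x = y
      · subst hxy; simp
      · rw [if_neg hxy, if_neg (fun h => hxy h.symm)]; ring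
    rw [h1, Matrix.mulVec_smul]
  by_cases hkχ : (S.Estar x k).mulVec χ = 0
  · exact ⟨0, by rw [hkχ, Matrix.mulVec_zero, zero_smul]⟩
  -- Main case : k ≠ 0, E_k^* χ ≠ 0
  have hkD1 : k < D + 1 := by omega
  have hD1 : 1 < D + 1 := by omega
  set kF : Fin (D + 1) := ⟨k, hkD1⟩ with hkF
  have hAMk : S.AM k = S.A kF := by rw [AssocScheme.AM, dif_pos hkD1]
  set Sfin : Finset ℕ := (Finset.range (D + 1)).filter
      (fun i => i ≠ 0 ∧ (S.Estar x i).mulVec χ ≠ 0) with hSfin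
  have hEstar_big : ∀ i : ℕ, ¬ i < D + 1 → (S.Estar x i).mulVec χ = 0 := by
    intro i hi
    have h0 : S.Estar x i = 0 := by
      simp only [AssocScheme.Estar, AssocScheme.AM, dif_neg hi]
      simp
    rw [h0, Matrix.zero_mulVec]
  have hscard : S.sX x χ = Sfin.card := by
    rw [AssocScheme.sX]
    have hset : {i : ℕ | i ≠ 0 ∧ (S.Estar x i).mulVec χ ≠ 0} = ↑Sfin := by
      ext i
      simp only [Set.mem_setOf_eq, hSfin, Finset.coe_filter, Finset.mem_range,
        Set.mem_setOf_eq]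
      constructor
      · intro h
        refine ⟨?_, h⟩
        by_contra hc
        exact h.2 (hEstar_big i hc)
      · exact fun h => h.2
    rw [hset, Set.ncard_coe_finset]
  have hkmem : k ∈ Sfin := by
    simp only [hSfin, Finset.mem_filter, Finset.mem_range]
    exact ⟨hkD1, hk0, hkχ⟩
  have hspos : 1 ≤ S.sX x χ := by
    rw [hscard]; exact Finset.card_pos.mpr ⟨k, hkmem⟩
  obtain ⟨q, hq⟩ := S.E_in_A ⟨1, hD1⟩
  set dvec : X → ℂ := fun y => (Fintype.card X : ℂ) * S.EM 1 x y with hdvec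
  have hAstar1 : S.Astar x 1 = Matrix.diagonal dvec := rfl
  set θn : ℕ → ℂ :=
    fun i => if h : i < D + 1 then (Fintype.card X : ℂ) * q ⟨i, h⟩ else 0 with hθn
  have hEM1 : S.EM 1 = S.E ⟨1, hD1⟩ := by rw [AssocScheme.EM, dif_pos hD1]
  have hdv : ∀ (y : X) (i : Fin (D + 1)), S.A i x y = 1 → dvec y = θn ↑i := by
    intro y i hi
    have h1 : S.E ⟨1, hD1⟩ x y = q i := by
      rw [hq]
      simp only [Matrix.sum_apply, Matrix.smul_apply, smul_eq_mul]
      rw [Finset.sum_eq_single i]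
      · rw [hi, mul_one]
      · intro m _ hm
        rw [AMproof.A_apply_ne S hi hm, mul_zero]
      · simp
    simp only [hdvec, hEM1, h1, hθn, dif_pos i.isLt, Fin.eta]
  have hrep : ∀ i ∈ Sfin, ∃ (h : i < D + 1) (y : X), S.A ⟨i, h⟩ x y = 1 := by
    intro i hi
    simp only [hSfin, Finset.mem_filter, Finset.mem_range] at hi
    refine ⟨hi.1, ?_⟩
    obtain ⟨y, hy⟩ := Function.ne_iff.mp hi.2.2
    simp only [AssocScheme.Estar, Matrix.mulVec_diagonal, AssocScheme.AM,
      dif_pos hi.1, Pi.zero_apply] at hy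
    have hA : S.A ⟨i, hi.1⟩ x y ≠ 0 := fun h => hy (by rw [h, zero_mul])
    exact ⟨y, (S.A_entries _ x y).resolve_left hA⟩
  have hsep : ∀ (y y' : X) (i i' : Fin (D + 1)), S.A i x y = 1 → S.A i' x y' = 1 →
      i ≠ i' → dvec y ≠ dvec y' := by
    intro y y' i i' hy hy' hne heq
    have hm : ∃ m : Fin (D + 1), S.E m x y ≠ S.E m x y' := by
      by_contra hall
      push_neg at hall
      obtain ⟨p, hp⟩ := S.A_in_E i
      have h0 : S.A i x y' = 0 := AMproof.A_apply_ne S hy' hne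
      have h1 : S.A i x y = S.A i x y' := by
        rw [hp]
        simp only [Matrix.sum_apply, Matrix.smul_apply, smul_eq_mul]
        exact Finset.sum_congr rfl fun m _ => by rw [hall m]
      rw [hy, h0] at h1
      exact one_ne_zero h1
    obtain ⟨m, hm⟩ := hm
    have hmem := hS.1 x m
    rw [Algebra.adjoin_singleton_eq_range_aeval] at hmem
    obtain ⟨p, hp⟩ := hmem
    have hp' : Polynomial.aeval (S.Astar x 1) p = S.Astar x ↑m := hp
    have hdiag : S.Astar x ↑m = Matrix.diagonal (fun z => p.eval (dvec z)) := by
      rw [← hp', hAstar1, AMproof.aeval_diagonal]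
    have hy2 := congrFun (congrFun hdiag y) y
    have hy2' := congrFun (congrFun hdiag y') y'
    simp only [AssocScheme.Astar, Matrix.diagonal_apply_eq] at hy2 hy2'
    rw [heq] at hy2
    have hcard : (Fintype.card X : ℂ) ≠ 0 := by
      have : Nonempty X := ⟨x⟩
      simp [Fintype.card_ne_zero]
    have hEMm : S.EM ↑m x y = S.EM ↑m x y' :=
      mul_left_cancel₀ hcard (hy2.trans hy2'.symm)
    rw [AssocScheme.EM, dif_pos m.isLt] at hEMm
    simp only [Fin.eta] at hEMm
    exact hm hEMm
  have hθdist : ∀ i ∈ Sfin, i ≠ k → θn i ≠ θn k := by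
    intro i hi hik
    obtain ⟨hiD, y, hy⟩ := hrep i hi
    obtain ⟨hkD', y', hy'⟩ := hrep k hkmem
    have hne : (⟨i, hiD⟩ : Fin (D + 1)) ≠ ⟨k, hkD'⟩ := by
      simp only [ne_eq, Fin.mk.injEq]
      exact hik
    have hd := hsep y y' _ _ hy hy' hne
    rwa [hdv y _ hy, hdv y' _ hy'] at hd
  set T : Finset ℕ := Sfin.erase k with hT
  set f : Polynomial ℂ :=
    ∏ i ∈ T, (Polynomial.C ((θn k - θn i)⁻¹) * (Polynomial.X - Polynomial.C (θn i)))
    with hf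
  have hdeg : f.natDegree ≤ S.sX x χ - 1 := by
    have hone : ∀ i ∈ T,
        (Polynomial.C ((θn k - θn i)⁻¹) *
          (Polynomial.X - Polynomial.C (θn i))).natDegree ≤ 1 := fun i _ =>
      le_trans (Polynomial.natDegree_C_mul_le _ _)
        (by simp [Polynomial.natDegree_X_sub_C])
    have h1 : f.natDegree ≤ ∑ i ∈ T, (Polynomial.C ((θn k - θn i)⁻¹) *
        (Polynomial.X - Polynomial.C (θn i))).natDegree :=
      Polynomial.natDegree_prod_le _ _
    refine le_trans h1 (le_trans (Finset.sum_le_sum hone) ?_)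
    rw [Finset.sum_const, smul_eq_mul, mul_one, hT, Finset.card_erase_of_mem hkmem, hscard]
  have hsub_ne : ∀ i ∈ T, θn k - θn i ≠ 0 := by
    intro i hi
    exact sub_ne_zero.mpr
      (Ne.symm (hθdist i (Finset.mem_of_mem_erase hi) (Finset.ne_of_mem_erase hi)))
  have hfk : f.eval (θn k) = 1 := by
    rw [hf, Polynomial.eval_prod]
    refine Finset.prod_eq_one fun i hi => ?_
    simp only [Polynomial.eval_mul, Polynomial.eval_C, Polynomial.eval_sub,
      Polynomial.eval_X]
    exact inv_mul_cancel₀ (hsub_ne i hi)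
  have hfT : ∀ i ∈ T, f.eval (θn i) = 0 := by
    intro i hi
    rw [hf, Polynomial.eval_prod]
    refine Finset.prod_eq_zero hi ?_
    simp
  set F : Matrix X X ℂ := Polynomial.aeval (S.Astar x 1) f with hFdef
  have hFdiag : F = Matrix.diagonal (fun y => f.eval (dvec y)) := by
    rw [hFdef, hAstar1, AMproof.aeval_diagonal]
  -- Claim 1
  have hclaim1 : F.mulVec χ =
      (S.Estar x k).mulVec χ + (f.eval (dvec x) * χ x) • xhat x := by
    funext y
    rw [hFdiag]
    simp only [Matrix.mulVec_diagonal, Pi.add_apply, Pi.smul_apply, smul_eq_mul]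
    have hEs : ((S.Estar x k).mulVec χ) y = S.A kF x y * χ y := by
      simp only [AssocScheme.Estar, Matrix.mulVec_diagonal, hAMk]
    rw [hEs]
    by_cases hyx : y = x
    · rw [hyx]
      have hA0 : S.A 0 x x = 1 := by rw [AMproof.A_zero_apply]; simp
      have hAk : S.A kF x x = 0 :=
        AMproof.A_apply_ne S hA0 (by simp only [ne_eq, hkF, Fin.ext_iff]; simpa using hk0)
      have hx1 : xhat x x = 1 := by simp [xhat]
      rw [hAk, hx1]
      ring
    · have hsingle : xhat x y = 0 := by
        simp [xhat, Pi.single_eq_of_ne hyx]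
      rw [hsingle, mul_zero, add_zero]
      by_cases hχy : χ y = 0
      · rw [hχy, mul_zero, mul_zero]
      · obtain ⟨i0, hi0⟩ := AMproof.sphere_exists S x y
        have hi0ne : (↑i0 : ℕ) ≠ 0 := by
          intro h
          have hi00 : i0 = 0 := by
            apply Fin.ext; simpa using h
          rw [hi00, AMproof.A_zero_apply, if_neg (fun hh => hyx hh.symm)] at hi0
          exact zero_ne_one hi0
        have hi0mem : (↑i0 : ℕ) ∈ Sfin := by
          simp only [hSfin, Finset.mem_filter, Finset.mem_range]
          refine ⟨i0.isLt, hi0ne, ?_⟩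
          intro h0
          have hy0 := congrFun h0 y
          simp only [AssocScheme.Estar, Matrix.mulVec_diagonal, AssocScheme.AM,
            dif_pos i0.isLt, Fin.eta, Pi.zero_apply] at hy0
          rw [hi0, one_mul] at hy0
          exact hχy hy0
        have hdy : dvec y = θn ↑i0 := hdv y i0 hi0
        by_cases hik : (↑i0 : ℕ) = k
        · have hkeq : kF = i0 := by
            apply Fin.ext; simp [hkF, hik]
          rw [hdy, hik, hfk, hkeq, hi0]
        · have hiT : (↑i0 : ℕ) ∈ T := Finset.mem_erase.mpr ⟨hik, hi0mem⟩
          have hAk : S.A kF x y = 0 :=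
            AMproof.A_apply_ne S hi0
              (by simp only [ne_eq, hkF, Fin.ext_iff]; exact fun h => hik h.symm)
          rw [hdy, hfT _ hiT, hAk]
  -- E_0 computations
  have hE0v : ∀ v : X → ℂ,
      (S.E 0).mulVec v = fun _ => (Fintype.card X : ℂ)⁻¹ * ∑ z, v z := by
    intro v
    funext y
    rw [S.E_zero]
    simp [Matrix.mulVec, dotProduct, Finset.mul_sum]
  have hxhat_sum : ∑ z, xhat x z = 1 := by simp [xhat]
  have hE0χ : (S.E 0).mulVec χ = (∑ z, χ z) • ((S.E 0).mulVec (xhat x)) := by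
    rw [hE0v, hE0v]
    funext y
    simp only [Pi.smul_apply, smul_eq_mul, hxhat_sum, mul_one]
    ring
  -- the matrix G
  have hAsymm : ∀ (i : Fin (D + 1)) (a b : X), S.A i a b = S.A i b a :=
    fun i a b => ((S.A_symm i).apply a b).symm
  set G : Matrix X X ℂ := ∑ i : Fin (D + 1), (f.eval (θn ↑i)) • S.A i with hG
  have hF1 : F.mulVec ((S.E 0).mulVec (xhat x)) =
      (Fintype.card X : ℂ)⁻¹ • (G.mulVec (xhat x)) := by
    funext y
    rw [hE0v, hFdiag]
    simp only [Matrix.mulVec_diagonal, hxhat_sum, mul_one, Pi.smul_apply, smul_eq_mul]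
    have hGx : (G.mulVec (xhat x)) y = G y x := by
      simp [Matrix.mulVec, dotProduct, xhat, Pi.single_apply]
    rw [hGx]
    obtain ⟨i0, hi0⟩ := AMproof.sphere_exists S x y
    have hGyx : G y x = f.eval (θn ↑i0) := by
      rw [hG]
      simp only [Matrix.sum_apply, Matrix.smul_apply, smul_eq_mul]
      rw [Finset.sum_eq_single i0]
      · rw [hAsymm i0 y x, hi0, mul_one]
      · intro m _ hm
        rw [hAsymm m y x, AMproof.A_apply_ne S hi0 hm, mul_zero]
      · simp
    rw [hGyx, hdv y i0 hi0]
    ring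
  have hEA : ∀ i : Fin (D + 1), ∃ c : ℂ, S.E jF * S.A i = c • S.E jF := by
    intro i
    obtain ⟨p, hp⟩ := S.A_in_E i
    refine ⟨p jF, ?_⟩
    rw [hp, Finset.mul_sum]
    rw [Finset.sum_eq_single jF]
    · rw [Matrix.mul_smul, S.E_idem, if_pos rfl]
    · intro m _ hm
      rw [Matrix.mul_smul, S.E_idem, if_neg (fun h => hm (h.symm)), smul_zero]
    · simp
  obtain ⟨cG, hcG⟩ : ∃ c : ℂ, S.E jF * G = c • S.E jF := by
    choose cA hcA using hEA
    refine ⟨∑ i : Fin (D + 1), f.eval (θn ↑i) * cA i, ?_⟩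
    rw [hG, Finset.mul_sum]
    simp only [Matrix.mul_smul, hcA, smul_smul]
    rw [← Finset.sum_smul]
  have hχdec : ∑ l : Fin (D + 1), (S.E l).mulVec χ = χ := by
    rw [← AMproof.sum_mulVec' Finset.univ (fun l => S.E l) χ, S.E_sum, Matrix.one_mulVec]
  have hzero : ∀ l : Fin (D + 1), l ≠ 0 →
      (S.EM j).mulVec (F.mulVec ((S.E l).mulVec χ)) = 0 := by
    intro l hl
    by_cases hlδ : (l : ℕ) < S.deltaStar χ
    · have hlz : (S.E l).mulVec χ = 0 := by
        by_contra hne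
        have hmem : (l : ℕ) ∈ {m : ℕ | m ≠ 0 ∧ (S.EM m).mulVec χ ≠ 0} := by
          refine ⟨?_, ?_⟩
          · exact fun h => hl (Fin.ext (by rw [Fin.val_zero]; exact h))
          · rw [AssocScheme.EM, dif_pos l.isLt]
            simpa [Fin.eta] using hne
        have hle := Nat.sInf_le hmem
        rw [← hδeq] at hle
        omega
      rw [hlz, Matrix.mulVec_zero, Matrix.mulVec_zero]
    · push_neg at hlδ
      have hmemESp : (S.E l).mulVec χ ∈ S.ESp (l : ℕ) := by
        refine ⟨χ, ?_⟩
        simp only [Matrix.mulVecLin_apply, AssocScheme.EM, dif_pos l.isLt, Fin.eta]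
      have hmem2 := AMproof.poly_mulVec_mem S hS x f hdeg hmemESp
      refine AMproof.biSup_kills S hjD _ ?_ hmem2
      intro m hm
      simp only [Finset.mem_Icc] at hm
      omega
  have hsplit : F.mulVec χ = ∑ l : Fin (D + 1), F.mulVec ((S.E l).mulVec χ) := by
    conv_lhs => rw [← hχdec]
    exact AMproof.mulVec_sum' _ _ _
  have hmain : (S.EM j).mulVec (F.mulVec χ) =
      ((∑ z, χ z) * ((Fintype.card X : ℂ)⁻¹ * cG)) • ((S.EM j).mulVec (xhat x)) := by
    rw [hsplit, AMproof.mulVec_sum']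
    rw [Finset.sum_eq_single 0]
    · rw [hE0χ, Matrix.mulVec_smul, hF1, Matrix.mulVec_smul, Matrix.mulVec_smul]
      rw [Matrix.mulVec_mulVec, hEMj, hcG, Matrix.smul_mulVec]
      rw [smul_smul, smul_smul, mul_assoc]
    · intro l _ hl
      exact hzero l hl
    · simp
  refine ⟨(∑ z, χ z) * ((Fintype.card X : ℂ)⁻¹ * cG) - f.eval (dvec x) * χ x, ?_⟩
  have hre : (S.EM j).mulVec ((S.Estar x k).mulVec χ) =
      (S.EM j).mulVec (F.mulVec χ) -
        (f.eval (dvec x) * χ x) • ((S.EM j).mulVec (xhat x)) := by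
    rw [hclaim1, Matrix.mulVec_add, Matrix.mulVec_smul]
    abel
  rw [hre, hmain, sub_smul]
end
end

section
/- Let T = T(x) be the Terwilliger algebra of a metric symmetric association scheme with respect to x, and let χ ∈ V. Then the following are equivalent: (i) χ is orthogonal to every irreducible T-module W ⊆ V with endpoint r(W) satisfying 1 ≤ r(W) ≤ t; (ii) for every F ∈ T, Fχ is a relative t-codesign with respect to x. -/
open Matrix

noncomputable section

set_option linter.unusedSectionVars false
namespace CP
open Matrix AssocScheme

variable {X : Type*} [Fintype X] [DecidableEq X] {D : ℕ}

lemma dotc_comm (u v : X → ℂ) : dotc u v = (starRingEnd ℂ) (dotc v u) := by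
  simp [dotc, map_sum, mul_comm]

lemma dotc_add_right (u a b : X → ℂ) : dotc u (a + b) = dotc u a + dotc u b := by
  simp [dotc, mul_add, Finset.sum_add_distrib]

lemma dotc_sub_right (u a b : X → ℂ) : dotc u (a - b) = dotc u a - dotc u b := by
  simp [dotc, map_sub, mul_sub, Finset.sum_sub_distrib]

lemma dotc_smul_right (u v : X → ℂ) (c : ℂ) :
    dotc u (c • v) = (starRingEnd ℂ) c * dotc u v := by
  simp [dotc, Finset.mul_sum]; ring_nf; simp [mul_comm, mul_left_comm]

lemma dotc_zero_right (u : X → ℂ) : dotc u 0 = 0 := by simp [dotc]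

lemma dotc_self_eq_zero {v : X → ℂ} (h : dotc v v = 0) : v = 0 := by
  have h' : ∑ y, Complex.normSq (v y) = 0 := by
    have := congrArg Complex.re h
    simpa [dotc, Complex.mul_conj, Complex.ofReal_sum] using this
  funext y
  have hy : Complex.normSq (v y) = 0 := by
    have := (Finset.sum_eq_zero_iff_of_nonneg (fun i _ => Complex.normSq_nonneg (v i))).1 h' y (Finset.mem_univ y)
    exact this
  simpa using Complex.normSq_eq_zero.1 hy

lemma dotc_mulVec_left (M : Matrix X X ℂ) (u v : X → ℂ) :
    dotc (M.mulVec u) v = dotc u (Mᴴ.mulVec v) := by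
  simp only [dotc, mulVec, dotProduct, conjTranspose_apply, map_sum,
    Finset.sum_mul, Finset.mul_sum]
  rw [Finset.sum_comm]
  refine Finset.sum_congr rfl fun y _ => Finset.sum_congr rfl fun z _ => ?_
  simp only [starRingEnd_apply, star_mul', star_star]
  ring

/-- The set of vectors `v` with `dotc χ v = 0` is a subspace. -/
def kerdot (χ : X → ℂ) : Submodule ℂ (X → ℂ) where
  carrier := {v | dotc χ v = 0}
  add_mem' := by intro a b ha hb; simp only [Set.mem_setOf_eq] at *; rw [dotc_add_right, ha, hb, add_zero]
  zero_mem' := dotc_zero_right χ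
  smul_mem' := by intro c v hv; simp only [Set.mem_setOf_eq] at *; rw [dotc_smul_right, hv, mul_zero]

lemma mem_kerdot {χ v : X → ℂ} : v ∈ kerdot χ ↔ dotc χ v = 0 := Iff.rfl

/-- Orthogonal complement with respect to `dotc`. -/
def orthC (U : Submodule ℂ (X → ℂ)) : Submodule ℂ (X → ℂ) where
  carrier := {v | ∀ u ∈ U, dotc u v = 0}
  add_mem' := by
    intro a b ha hb; intro u hu; rw [dotc_add_right, ha u hu, hb u hu, add_zero]
  zero_mem' := fun u _ => dotc_zero_right u
  smul_mem' := by
    intro c v hv u hu; rw [dotc_smul_right, hv u hu, mul_zero]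

lemma mem_orthC {U : Submodule ℂ (X → ℂ)} {v : X → ℂ} :
    v ∈ orthC U ↔ ∀ u ∈ U, dotc u v = 0 := Iff.rfl

lemma eq_zero_of_mem_inf_orthC {U : Submodule ℂ (X → ℂ)} {v : X → ℂ}
    (h1 : v ∈ U) (h2 : v ∈ orthC U) : v = 0 :=
  dotc_self_eq_zero (h2 v h1)

lemma ortho_decomp (U : Submodule ℂ (X → ℂ)) (v : X → ℂ) :
    ∃ u ∈ U, v - u ∈ orthC U := by
  let U' : Submodule ℂ (EuclideanSpace ℂ X) := U.comap (WithLp.linearEquiv 2 ℂ (X → ℂ)).toLinearMap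
  obtain ⟨y, hy, z, hz, hyz⟩ := U'.exists_add_mem_mem_orthogonal (WithLp.toLp 2 v)
  refine ⟨y.ofLp, hy, fun w hw => ?_⟩
  rw [Submodule.mem_orthogonal] at hz
  have h0 := hz (WithLp.toLp 2 w) hw
  have hyz' : v - y.ofLp = z.ofLp := by
    rw [show v = (WithLp.toLp 2 v).ofLp from rfl, hyz]; simp
  rw [hyz']
  calc dotc w z.ofLp = (starRingEnd ℂ) (@inner ℂ (EuclideanSpace ℂ X) _ (WithLp.toLp 2 w) z) := by
        simp [dotc, PiLp.inner_apply, RCLike.inner_apply, mul_comm, map_sum]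
    _ = 0 := by rw [h0]; simp

lemma isCompl_orthC (U : Submodule ℂ (X → ℂ)) : IsCompl U (orthC U) := by
  constructor
  · rw [disjoint_iff, eq_bot_iff]
    rintro v ⟨h1, h2⟩
    exact eq_zero_of_mem_inf_orthC h1 h2
  · rw [codisjoint_iff, eq_top_iff]
    intro v _
    obtain ⟨u, hu, ho⟩ := ortho_decomp U v
    exact Submodule.mem_sup.2 ⟨u, hu, v - u, ho, by abel⟩

end CP
section Chunk2
namespace CP
open Matrix AssocScheme

variable {X : Type*} [Fintype X] [DecidableEq X] {D : ℕ} (S : AssocScheme X D) (x : X)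

lemma AM_coe (i : Fin (D + 1)) : S.AM (i : ℕ) = S.A i := by
  simp [AssocScheme.AM, i.isLt]

lemma AM_of_gt {i : ℕ} (h : D + 1 ≤ i) : S.AM i = 0 := by
  simp [AssocScheme.AM, Nat.not_lt.2 h]

lemma AM_symm (i : ℕ) (y z : X) : S.AM i y z = S.AM i z y := by
  unfold AssocScheme.AM
  split
  · next h =>
    have hs := S.A_symm ⟨i, h⟩
    unfold Matrix.IsSymm at hs
    conv_lhs => rw [← hs]
    rfl
  · rfl

lemma AM_entries (i : ℕ) (y z : X) : S.AM i y z = 0 ∨ S.AM i y z = 1 := by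
  unfold AssocScheme.AM
  split
  · exact S.A_entries _ y z
  · left; rfl

lemma AM_sum_eq_one (y z : X) : ∑ i : Fin (D + 1), S.A i y z = 1 := by
  have := congrFun (congrFun S.A_sum y) z
  simpa [Matrix.sum_apply] using this

lemma AM_disjoint {i j : ℕ} (h : i ≠ j) (y z : X) : S.AM i y z * S.AM j y z = 0 := by
  rcases AM_entries S i y z with h1 | h1
  · rw [h1, zero_mul]
  rcases AM_entries S j y z with h2 | h2
  · rw [h2, mul_zero]
  exfalso
  -- both entries are 1; contradicts row sum 1
  have hi : i < D + 1 := by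
    by_contra hc; rw [AM_of_gt S (Nat.not_lt.1 hc)] at h1; simp at h1
  have hj : j < D + 1 := by
    by_contra hc; rw [AM_of_gt S (Nat.not_lt.1 hc)] at h2; simp at h2
  have hAi : S.A ⟨i, hi⟩ y z = 1 := by rw [← AM_coe S ⟨i, hi⟩]; exact h1
  have hAj : S.A ⟨j, hj⟩ y z = 1 := by rw [← AM_coe S ⟨j, hj⟩]; exact h2
  have hne : (⟨i, hi⟩ : Fin (D + 1)) ≠ ⟨j, hj⟩ := by
    simp only [ne_eq, Fin.mk.injEq]; exact h
  have hsum := AM_sum_eq_one S y z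
  have hre : ∑ k : Fin (D + 1), (S.A k y z).re = 1 := by
    have := congrArg Complex.re hsum
    simpa [Complex.re_sum] using this
  have hnn : ∀ k : Fin (D + 1), k ∈ Finset.univ → 0 ≤ (S.A k y z).re := by
    intro k _
    rcases S.A_entries k y z with h | h <;> simp [h]
  have h2le : (2 : ℝ) ≤ ∑ k : Fin (D + 1), (S.A k y z).re := by
    have hsub : ({⟨i, hi⟩, ⟨j, hj⟩} : Finset (Fin (D + 1))) ⊆ Finset.univ := Finset.subset_univ _
    calc (2 : ℝ) = ∑ k ∈ ({⟨i, hi⟩, ⟨j, hj⟩} : Finset (Fin (D + 1))), (S.A k y z).re := by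
          rw [Finset.sum_pair hne, hAi, hAj]; norm_num
      _ ≤ ∑ k : Fin (D + 1), (S.A k y z).re :=
          Finset.sum_le_sum_of_subset_of_nonneg hsub (fun k _ _ => hnn k (Finset.mem_univ k))
  rw [hre] at h2le
  linarith

lemma mulVec_xhat (j : ℕ) : (S.AM j).mulVec (xhat x) = fun y => S.AM j x y := by
  funext y
  simp only [xhat, mulVec, dotProduct, Pi.single_apply, mul_ite, mul_one, mul_zero]
  rw [Finset.sum_ite_eq' Finset.univ x fun z => S.AM j y z]
  simp [AM_symm S j]

lemma Estar_mulVec (i : ℕ) (v : X → ℂ) :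
    (S.Estar x i).mulVec v = fun y => S.AM i x y * v y := by
  funext y
  simp [AssocScheme.Estar, Matrix.mulVec_diagonal]

lemma Estar_of_gt {i : ℕ} (h : D + 1 ≤ i) : S.Estar x i = 0 := by
  unfold AssocScheme.Estar
  rw [AM_of_gt S h]
  simp [Matrix.diagonal_zero]

lemma Estar_idem (i : ℕ) (v : X → ℂ) :
    (S.Estar x i).mulVec ((S.Estar x i).mulVec v) = (S.Estar x i).mulVec v := by
  rw [Estar_mulVec, Estar_mulVec]
  funext y
  dsimp only
  rcases AM_entries S i x y with h | h <;> rw [h] <;> ring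

lemma Estar_conjT (i : ℕ) : (S.Estar x i)ᴴ = S.Estar x i := by
  unfold AssocScheme.Estar
  rw [Matrix.diagonal_conjTranspose]
  have : (star fun y => S.AM i x y) = fun y => S.AM i x y := by
    funext y
    rcases AM_entries S i x y with h | h <;> simp [Pi.star_apply, h]
  rw [this]

lemma A_conjT (i : Fin (D + 1)) : (S.A i)ᴴ = S.A i := by
  ext y z
  rw [Matrix.conjTranspose_apply]
  have hsymm : S.A i z y = S.A i y z := by
    have := AM_symm S (i : ℕ) z y
    rwa [AM_coe] at this
  rw [hsymm]
  rcases S.A_entries i y z with h | h <;> simp [h]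

lemma Estar_zero_mulVec (v : X → ℂ) :
    (S.Estar x 0).mulVec v = v x • xhat x := by
  rw [Estar_mulVec]
  funext y
  have h0 : S.AM 0 x y = if x = y then 1 else 0 := by
    have : S.AM 0 = S.A 0 := by
      have := AM_coe S (0 : Fin (D + 1))
      simpa using this
    rw [this, S.A_zero, Matrix.one_apply]
  rw [h0]
  simp only [Pi.smul_apply, xhat, Pi.single_apply, smul_eq_mul]
  by_cases h : x = y
  · subst h; simp
  · simp [h, Ne.symm h]

lemma xhat_apply_self : xhat (X := X) x x = 1 := by simp [xhat]

lemma xhat_ne_zero : xhat (X := X) x ≠ 0 := by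
  intro h
  have := congrFun h x
  rw [xhat_apply_self] at this
  simpa using this

lemma Estar_sum : ∑ i : Fin (D + 1), S.Estar x (i : ℕ) = 1 := by
  ext y z
  rw [Matrix.sum_apply]
  unfold AssocScheme.Estar
  by_cases h : y = z
  · subst h
    simp only [Matrix.diagonal_apply_eq, Matrix.one_apply_eq]
    have : ∀ i : Fin (D + 1), S.AM (i : ℕ) x y = S.A i x y := fun i => by rw [AM_coe]
    simp only [this]
    exact AM_sum_eq_one S x y
  · simp [Matrix.diagonal_apply_ne _ h, Matrix.one_apply_ne h]

lemma Estar_AM_xhat (i j : ℕ) :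
    (S.Estar x i).mulVec ((S.AM j).mulVec (xhat x)) =
      if i = j then (S.AM j).mulVec (xhat x) else 0 := by
  rw [Estar_mulVec, mulVec_xhat]
  by_cases h : i = j
  · subst h
    rw [if_pos rfl]
    funext y
    rcases AM_entries S i x y with h | h <;> simp [h]
  · simp only [if_neg h]
    funext y
    exact AM_disjoint S h x y

end CP
end Chunk2
section Chunk3
namespace CP
open Matrix AssocScheme

variable {X : Type*} [Fintype X] [DecidableEq X] {D : ℕ} (S : AssocScheme X D) (x : X)

lemma mulVec_sum {ι : Type*} (s : Finset ι) (M : Matrix X X ℂ) (f : ι → (X → ℂ)) :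
    M.mulVec (∑ i ∈ s, f i) = ∑ i ∈ s, M.mulVec (f i) := by
  simpa only [Matrix.mulVecLin_apply] using map_sum M.mulVecLin f s

lemma mulVec_smul' (M : Matrix X X ℂ) (c : ℂ) (v : X → ℂ) :
    M.mulVec (c • v) = c • M.mulVec v := by
  simpa only [Matrix.mulVecLin_apply] using map_smul M.mulVecLin c v

lemma mulVec_zero' (M : Matrix X X ℂ) : M.mulVec (0 : X → ℂ) = 0 := by
  simpa [Matrix.mulVecLin_apply] using map_zero M.mulVecLin

lemma sum_mulVec {ι : Type*} (s : Finset ι) (f : ι → Matrix X X ℂ) (v : X → ℂ) :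
    (∑ i ∈ s, f i) *ᵥ v = ∑ i ∈ s, f i *ᵥ v := by
  classical
  induction s using Finset.induction with
  | empty => simp [Matrix.zero_mulVec]
  | insert _ _ h ih => simp [Finset.sum_insert h, Matrix.add_mulVec, ih]

lemma mem_primary_iff {u : X → ℂ} :
    u ∈ S.primary x ↔ ∃ c : Fin (D + 1) → ℂ, ∑ j, c j • (S.A j).mulVec (xhat x) = u := by
  rw [AssocScheme.primary, Submodule.mem_span_range_iff_exists_fun]

lemma AM_xhat_mem_primary (i : ℕ) : (S.AM i).mulVec (xhat x) ∈ S.primary x := by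
  by_cases h : i < D + 1
  · have : S.AM i = S.A ⟨i, h⟩ := by rw [← AM_coe S ⟨i, h⟩]
    rw [this]
    exact Submodule.subset_span ⟨⟨i, h⟩, rfl⟩
  · rw [AM_of_gt S (Nat.not_lt.1 h)]
    rw [Matrix.zero_mulVec]
    exact Submodule.zero_mem _

lemma Estar_primary (i : ℕ) {u : X → ℂ} (hu : u ∈ S.primary x) :
    ∃ c : ℂ, (S.Estar x i).mulVec u = c • (S.AM i).mulVec (xhat x) := by
  obtain ⟨c, rfl⟩ := (mem_primary_iff S x).1 hu
  by_cases h : i < D + 1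
  · refine ⟨c ⟨i, h⟩, ?_⟩
    rw [mulVec_sum]
    have hterm : ∀ j : Fin (D + 1),
        (S.Estar x i).mulVec (c j • (S.A j).mulVec (xhat x)) =
          if (⟨i, h⟩ : Fin (D + 1)) = j then c j • (S.AM i).mulVec (xhat x) else 0 := by
      intro j
      rw [mulVec_smul']
      rw [show S.A j = S.AM (j : ℕ) from (AM_coe S j).symm]
      rw [Estar_AM_xhat]
      by_cases hij : i = (j : ℕ)
      · have : (⟨i, h⟩ : Fin (D + 1)) = j := by exact Fin.ext hij
        rw [if_pos hij, if_pos this, hij]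
      · have : ¬ ((⟨i, h⟩ : Fin (D + 1)) = j) := by
          intro hc; exact hij (by rw [← hc])
        rw [if_neg hij, if_neg this, smul_zero]
    rw [Finset.sum_congr rfl (fun j _ => hterm j)]
    rw [Finset.sum_ite_eq Finset.univ (⟨i, h⟩ : Fin (D + 1)) (fun j => c j • (S.AM i).mulVec (xhat x))]
    simp
  · refine ⟨0, ?_⟩
    rw [Estar_of_gt S x (Nat.not_lt.1 h)]
    simp [Matrix.zero_mulVec]

lemma xhat_mem_primary : xhat x ∈ S.primary x := by
  have h0 : (S.A 0).mulVec (xhat x) = xhat x := by rw [S.A_zero, Matrix.one_mulVec]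
  exact h0 ▸ Submodule.subset_span ⟨0, rfl⟩

-- Talg membership
lemma A_mem_Talg (i : Fin (D + 1)) : S.A i ∈ S.Talg x :=
  Algebra.subset_adjoin (Or.inl ⟨i, rfl⟩)

lemma Estar_mem_Talg (i : ℕ) : S.Estar x i ∈ S.Talg x := by
  by_cases h : i < D + 1
  · have : S.Estar x i = S.Estar x ((⟨i, h⟩ : Fin (D + 1)) : ℕ) := rfl
    rw [this]
    exact Algebra.subset_adjoin (Or.inr ⟨⟨i, h⟩, rfl⟩)
  · rw [Estar_of_gt S x (Nat.not_lt.1 h)]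
    exact Subalgebra.zero_mem _

lemma AM_mem_Talg (i : ℕ) : S.AM i ∈ S.Talg x := by
  by_cases h : i < D + 1
  · have : S.AM i = S.A ⟨i, h⟩ := by rw [← AM_coe S ⟨i, h⟩]
    rw [this]; exact A_mem_Talg S x ⟨i, h⟩
  · rw [AM_of_gt S (Nat.not_lt.1 h)]; exact Subalgebra.zero_mem _

lemma conjT_mem_Talg {F : Matrix X X ℂ} (hF : F ∈ S.Talg x) : Fᴴ ∈ S.Talg x := by
  induction hF using Algebra.adjoin_induction with
  | mem g hg =>
    rcases hg with ⟨i, rfl⟩ | ⟨i, rfl⟩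
    · rw [A_conjT]; exact A_mem_Talg S x i
    · rw [Estar_conjT]; exact Estar_mem_Talg S x i
  | algebraMap r =>
    rw [Algebra.algebraMap_eq_smul_one, Matrix.conjTranspose_smul, Matrix.conjTranspose_one]
    exact Subalgebra.smul_mem _ (Subalgebra.one_mem _) _
  | add a b ha hb iha ihb =>
    rw [Matrix.conjTranspose_add]; exact Subalgebra.add_mem _ iha ihb
  | mul a b ha hb iha ihb =>
    rw [Matrix.conjTranspose_mul]; exact Subalgebra.mul_mem _ ihb iha

-- primary is a T-module
lemma primary_tsub : S.IsTSub x (S.primary x) := by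
  have key : ∀ F ∈ S.Talg x, ∀ j : Fin (D + 1),
      F.mulVec ((S.A j).mulVec (xhat x)) ∈ S.primary x → True := fun _ _ _ _ => trivial
  intro F hF
  induction hF using Algebra.adjoin_induction with
  | mem g hg =>
    -- it suffices to check on the spanning set
    intro v hv
    induction hv using Submodule.span_induction with
    | mem w hw =>
      obtain ⟨j, rfl⟩ := hw
      rcases hg with ⟨i, rfl⟩ | ⟨i, rfl⟩ <;> dsimp only
      · rw [Matrix.mulVec_mulVec]
        obtain ⟨p, hp⟩ := S.A_mul_closed i j
        rw [hp, sum_mulVec]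
        refine Submodule.sum_mem _ fun k _ => ?_
        rw [Matrix.smul_mulVec]
        exact Submodule.smul_mem _ _ (Submodule.subset_span ⟨k, rfl⟩)
      · rw [show S.A j = S.AM (j : ℕ) from (AM_coe S j).symm, Estar_AM_xhat]
        by_cases hij : (i : ℕ) = (j : ℕ)
        · rw [if_pos hij]; exact AM_xhat_mem_primary S x _
        · rw [if_neg hij]; exact Submodule.zero_mem _
    | zero => rw [mulVec_zero']; exact Submodule.zero_mem _
    | add a b _ _ iha ihb => rw [Matrix.mulVec_add]; exact Submodule.add_mem _ iha ihb
    | smul c a _ iha => rw [mulVec_smul']; exact Submodule.smul_mem _ _ iha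
  | algebraMap r =>
    intro v hv
    rw [Algebra.algebraMap_eq_smul_one, Matrix.smul_mulVec, Matrix.one_mulVec]
    exact Submodule.smul_mem _ _ hv
  | add a b ha hb iha ihb =>
    intro v hv
    rw [Matrix.add_mulVec]
    exact Submodule.add_mem _ (iha v hv) (ihb v hv)
  | mul a b ha hb iha ihb =>
    intro v hv
    rw [← Matrix.mulVec_mulVec]
    exact iha _ (ihb v hv)

lemma orthC_tsub {U : Submodule ℂ (X → ℂ)} (hU : S.IsTSub x U) : S.IsTSub x (orthC U) := by
  intro F hF v hv u hu
  have h1 : Fᴴ.mulVec u ∈ U := hU Fᴴ (conjT_mem_Talg S x hF) u hu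
  calc dotc u (F.mulVec v) = (starRingEnd ℂ) (dotc (F.mulVec v) u) := dotc_comm _ _
    _ = (starRingEnd ℂ) (dotc v (Fᴴ.mulVec u)) := by rw [dotc_mulVec_left]
    _ = (starRingEnd ℂ) ((starRingEnd ℂ) (dotc (Fᴴ.mulVec u) v)) :=
          congrArg _ (dotc_comm v _)
    _ = dotc (Fᴴ.mulVec u) v := Complex.conj_conj _
    _ = 0 := hv _ h1

lemma inf_tsub {U U' : Submodule ℂ (X → ℂ)} (hU : S.IsTSub x U) (hU' : S.IsTSub x U') :
    S.IsTSub x (U ⊓ U') := by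
  rintro F hF v ⟨h1, h2⟩
  exact ⟨hU F hF v h1, hU' F hF v h2⟩

end CP
end Chunk3
section Chunk4
namespace CP
open Matrix AssocScheme

variable {X : Type*} [Fintype X] [DecidableEq X] {D : ℕ} (S : AssocScheme X D) (x : X)

lemma map_mulVecLin_eq_bot_iff {M : Matrix X X ℂ} {W : Submodule ℂ (X → ℂ)} :
    Submodule.map M.mulVecLin W = ⊥ ↔ ∀ w ∈ W, M.mulVec w = 0 := by
  rw [Submodule.eq_bot_iff]
  constructor
  · intro h w hw
    exact h _ ⟨w, hw, rfl⟩
  · rintro h _ ⟨w, hw, rfl⟩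
    exact h w hw

lemma supp_nonempty {W : Submodule ℂ (X → ℂ)} (hW : W ≠ ⊥) : (S.supp x W).Nonempty := by
  by_contra h
  rw [Set.not_nonempty_iff_eq_empty] at h
  apply hW
  rw [Submodule.eq_bot_iff]
  intro w hw
  have hz : ∀ i : Fin (D + 1), (S.Estar x (i : ℕ)).mulVec w = 0 := by
    intro i
    have hns : (i : ℕ) ∉ S.supp x W := h ▸ Set.notMem_empty _
    have : Submodule.map (S.Estar x (i : ℕ)).mulVecLin W = ⊥ := by
      by_contra hb
      exact hns ⟨Nat.lt_succ_iff.1 i.isLt, hb⟩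
    exact (map_mulVecLin_eq_bot_iff).1 this w hw
  have : w = (1 : Matrix X X ℂ).mulVec w := (Matrix.one_mulVec w).symm
  rw [this, ← Estar_sum S x, sum_mulVec]
  exact Finset.sum_eq_zero fun i _ => hz i

lemma Estar_zero_of_endpoint_pos {W : Submodule ℂ (X → ℂ)}
    (h : 1 ≤ S.endpoint x W) : ∀ w ∈ W, (S.Estar x 0).mulVec w = 0 := by
  have h0 : 0 ∉ S.supp x W := by
    intro hmem
    have := Nat.sInf_le hmem
    rw [AssocScheme.endpoint] at h
    omega
  have : Submodule.map (S.Estar x 0).mulVecLin W = ⊥ := by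
    by_contra hb
    exact h0 ⟨Nat.zero_le D, hb⟩
  exact (map_mulVecLin_eq_bot_iff).1 this

/-- Every nonzero T-submodule of the primary module contains `x̂`. -/
lemma xhat_mem_of_tsub_primary {U : Submodule ℂ (X → ℂ)} (hle : U ≤ S.primary x)
    (hT : S.IsTSub x U) (hbot : U ≠ ⊥) : xhat x ∈ U := by
  obtain ⟨u, huU, hune⟩ := Submodule.exists_mem_ne_zero_of_ne_bot hbot
  obtain ⟨j, hj⟩ : ∃ j : Fin (D + 1), (S.Estar x (j : ℕ)).mulVec u ≠ 0 := by
    by_contra h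
    push_neg at h
    apply hune
    have : u = (1 : Matrix X X ℂ).mulVec u := (Matrix.one_mulVec u).symm
    rw [this, ← Estar_sum S x, sum_mulVec]
    exact Finset.sum_eq_zero fun i _ => h i
  have hEu : (S.Estar x (j : ℕ)).mulVec u ∈ U := hT _ (Estar_mem_Talg S x _) u huU
  obtain ⟨c, hc⟩ := Estar_primary S x (j : ℕ) (hle huU)
  rw [hc] at hj hEu
  have hcne : c ≠ 0 := by rintro rfl; simp at hj
  have hAne : (S.AM (j : ℕ)).mulVec (xhat x) ≠ 0 := by
    rintro hA; rw [hA, smul_zero] at hj; exact hj rfl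
  have hAj : (S.AM (j : ℕ)).mulVec (xhat x) ∈ U := by
    have := Submodule.smul_mem U c⁻¹ hEu
    rwa [smul_smul, inv_mul_cancel₀ hcne, one_smul] at this
  have h2 : (S.AM (j : ℕ)).mulVec ((S.AM (j : ℕ)).mulVec (xhat x)) ∈ U :=
    hT _ (AM_mem_Talg S x _) _ hAj
  have h3 : (S.Estar x 0).mulVec ((S.AM (j : ℕ)).mulVec ((S.AM (j : ℕ)).mulVec (xhat x))) ∈ U :=
    hT _ (Estar_mem_Talg S x 0) _ h2
  rw [Estar_zero_mulVec] at h3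
  set wx := ((S.AM (j : ℕ)).mulVec ((S.AM (j : ℕ)).mulVec (xhat x))) x with hwx
  -- wx = ∑ z, AM j x z ≠ 0
  have hwxval : wx = ∑ z, S.AM (j : ℕ) x z := by
    rw [hwx, mulVec_xhat]
    simp only [mulVec, dotProduct]
    refine Finset.sum_congr rfl fun z _ => ?_
    rcases AM_entries S (j : ℕ) x z with h | h <;> rw [h] <;> ring
  obtain ⟨y, hy⟩ : ∃ y, S.AM (j : ℕ) x y ≠ 0 := by
    by_contra h
    push_neg at h
    apply hAne
    rw [mulVec_xhat]
    funext z
    exact h z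
  have hAy : S.AM (j : ℕ) x y = 1 := by
    rcases AM_entries S (j : ℕ) x y with h | h
    · exact absurd h hy
    · exact h
  have hwxne : wx ≠ 0 := by
    intro h0
    rw [hwxval] at h0
    have hre := congrArg Complex.re h0
    rw [Complex.re_sum] at hre
    have hnn : ∀ z ∈ Finset.univ, (0 : ℝ) ≤ (S.AM (j : ℕ) x z).re := by
      intro z _
      rcases AM_entries S (j : ℕ) x z with h | h <;> simp [h]
    have hone : (1 : ℝ) ≤ ∑ z, (S.AM (j : ℕ) x z).re := by
      have := Finset.single_le_sum hnn (Finset.mem_univ y)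
      rw [hAy] at this
      simpa using this
    simp only [Complex.zero_re] at hre
    linarith
  have := Submodule.smul_mem U wx⁻¹ h3
  rwa [smul_smul, inv_mul_cancel₀ hwxne, one_smul] at this

/-- Semisimplicity: every T-submodule is contained in the span of its irreducible
T-submodules. -/
lemma tsub_le_sSup_irr : ∀ (n : ℕ) (U : Submodule ℂ (X → ℂ)), Module.finrank ℂ U = n →
    S.IsTSub x U → U ≤ sSup {W | S.IsIrr x W ∧ W ≤ U} := by
  intro n
  induction n using Nat.strong_induction_on with
  | _ n ih =>
    intro U hn hU
    by_cases hbot : U = ⊥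
    · rw [hbot]; exact bot_le
    · set s : Set ℕ := {m | ∃ W : Submodule ℂ (X → ℂ),
        W ≤ U ∧ S.IsTSub x W ∧ W ≠ ⊥ ∧ Module.finrank ℂ W = m} with hs_def
      have hs : s.Nonempty := ⟨Module.finrank ℂ U, U, le_refl U, hU, hbot, rfl⟩
      obtain ⟨W, hWU, hWT, hWbot, hWrank⟩ := Nat.sInf_mem hs
      have hWirr : S.IsIrr x W := by
        refine ⟨hWT, hWbot, fun W' hW' hW'T => ?_⟩
        by_contra hcon
        push_neg at hcon
        obtain ⟨h1, h2⟩ := hcon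
        have hlt : W' < W := lt_of_le_of_ne hW' h2
        have hrlt : Module.finrank ℂ W' < Module.finrank ℂ W :=
          Submodule.finrank_lt_finrank_of_lt hlt
        have hmem : Module.finrank ℂ W' ∈ s :=
          ⟨W', hW'.trans hWU, hW'T, h1, rfl⟩
        have := Nat.sInf_le hmem
        omega
      set U' := orthC W ⊓ U with hU'_def
      have hU'T : S.IsTSub x U' := inf_tsub S x (orthC_tsub S x hWT) hU
      have hU'lt : U' < U := by
        refine lt_of_le_of_ne inf_le_right ?_
        intro heq
        obtain ⟨w, hwW, hwne⟩ := Submodule.exists_mem_ne_zero_of_ne_bot hWbot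
        have hwU : w ∈ U := hWU hwW
        have hwU' : w ∈ U' := heq ▸ hwU
        exact hwne (eq_zero_of_mem_inf_orthC hwW hwU'.1)
      have hstep : U ≤ W ⊔ U' := by
        intro v hv
        obtain ⟨w, hw, hperp⟩ := ortho_decomp W v
        have hvw : v - w ∈ U' := ⟨hperp, Submodule.sub_mem U hv (hWU hw)⟩
        exact Submodule.mem_sup.2 ⟨w, hw, v - w, hvw, by abel⟩
      have hrank' : Module.finrank ℂ U' < n := by
        rw [← hn]
        exact Submodule.finrank_lt_finrank_of_lt hU'lt
      have ihU' := ih _ hrank' U' rfl hU'T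
      refine hstep.trans (sup_le ?_ ?_)
      · exact le_sSup ⟨hWirr, hWU⟩
      · refine ihU'.trans (sSup_le_sSup ?_)
        rintro W'' ⟨h1, h2⟩
        exact ⟨h1, h2.trans hU'lt.le⟩

end CP
end Chunk4
section Chunk5
namespace CP
open Matrix AssocScheme

variable {X : Type*} [Fintype X] [DecidableEq X] {D : ℕ} (S : AssocScheme X D) (x : X)

/-- The orthogonal projection onto the primary module, as a linear endomorphism. -/
def primProj : (X → ℂ) →ₗ[ℂ] (X → ℂ) :=
  (S.primary x).subtype.comp
    ((S.primary x).projectionOnto (orthC (S.primary x)) (isCompl_orthC (S.primary x)))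

lemma primProj_mem (v : X → ℂ) : primProj S x v ∈ S.primary x :=
  ((S.primary x).projectionOnto _ (isCompl_orthC _) v).2

lemma primProj_decomp (v : X → ℂ) : v - primProj S x v ∈ orthC (S.primary x) := by
  obtain ⟨u, hu, ho⟩ := ortho_decomp (S.primary x) v
  have hv : v = u + (v - u) := by abel
  have hcalc : primProj S x v = u := by
    rw [primProj]
    simp only [LinearMap.comp_apply, Submodule.coe_subtype]
    conv_lhs => rw [hv]
    rw [map_add, Submodule.projectionOnto_apply_of_mem_right _ ho,
      add_zero]
    have : (⟨u, hu⟩ : S.primary x) =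
        (S.primary x).projectionOnto (orthC (S.primary x)) (isCompl_orthC _) u :=
      (Submodule.projectionOnto_apply_left (isCompl_orthC _) ⟨u, hu⟩).symm
    rw [← this]
  rw [hcalc]
  exact ho

lemma primProj_eq_of_decomp {v u : X → ℂ} (hu : u ∈ S.primary x)
    (ho : v - u ∈ orthC (S.primary x)) : primProj S x v = u := by
  -- both u and primProj v are "the" primary component of v
  have h1 : primProj S x v - u ∈ S.primary x :=
    Submodule.sub_mem _ (primProj_mem S x v) hu
  have h2 : primProj S x v - u ∈ orthC (S.primary x) := by
    have := Submodule.sub_mem _ ho (primProj_decomp S x v)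
    -- (v - u) - (v - primProj v) = primProj v - u
    have heq : (v - u) - (v - primProj S x v) = primProj S x v - u := by abel
    rwa [heq] at this
  have := eq_zero_of_mem_inf_orthC h1 h2
  have := sub_eq_zero.1 this
  exact this

lemma primProj_comm {F : Matrix X X ℂ} (hF : F ∈ S.Talg x) (v : X → ℂ) :
    primProj S x (F.mulVec v) = F.mulVec (primProj S x v) := by
  apply primProj_eq_of_decomp
  · exact primary_tsub S x F hF _ (primProj_mem S x v)
  · have h2 : F.mulVec (v - primProj S x v) ∈ orthC (S.primary x) :=
      orthC_tsub S x (primary_tsub S x) F hF _ (primProj_decomp S x v)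
    have heq : F.mulVec v - F.mulVec (primProj S x v) = F.mulVec (v - primProj S x v) := by
      rw [Matrix.mulVec_sub]
    rwa [heq]

/-- An irreducible module with endpoint at least 1 is orthogonal to the primary module. -/
lemma irr_le_orthC_primary {W : Submodule ℂ (X → ℂ)} (hW : S.IsIrr x W)
    (hr : 1 ≤ S.endpoint x W) : W ≤ orthC (S.primary x) := by
  have hE0 := Estar_zero_of_endpoint_pos S x hr
  rcases hW.2.2 (W ⊓ orthC (S.primary x)) inf_le_left
      (inf_tsub S x hW.1 (orthC_tsub S x (primary_tsub S x))) with hbot | heq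
  · exfalso
    set L := primProj S x with hL
    set U := Submodule.map L W with hU_def
    have hUT : S.IsTSub x U := by
      rintro F hF _ ⟨w, hw, rfl⟩
      exact ⟨F.mulVec w, hW.1 F hF w hw, primProj_comm S x hF w⟩
    have hUle : U ≤ S.primary x := by
      rintro _ ⟨w, hw, rfl⟩
      exact primProj_mem S x w
    have hUbot : U ≠ ⊥ := by
      intro h
      apply hW.2.1
      rw [Submodule.eq_bot_iff]
      intro w hw
      have hLw : L w = 0 := by
        have : L w ∈ (⊥ : Submodule ℂ (X → ℂ)) := h ▸ Submodule.mem_map_of_mem hw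
        simpa using this
      have hwo : w ∈ orthC (S.primary x) := by
        have := primProj_decomp S x w
        rwa [← hL, hLw, sub_zero] at this
      have : w ∈ W ⊓ orthC (S.primary x) := ⟨hw, hwo⟩
      rw [hbot] at this
      simpa using this
    have hxmem := xhat_mem_of_tsub_primary S x hUle hUT hUbot
    obtain ⟨w₀, hw₀, hLw₀⟩ := hxmem
    -- E_0^* (L w₀) = L (E_0^* w₀) = 0 but E_0^* x̂ = x̂ ≠ 0
    have hc : (S.Estar x 0).mulVec (L w₀) = L ((S.Estar x 0).mulVec w₀) :=
      (primProj_comm S x (Estar_mem_Talg S x 0) w₀).symm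
    rw [hLw₀, hE0 w₀ hw₀, map_zero] at hc
    rw [Estar_zero_mulVec, xhat_apply_self, one_smul] at hc
    exact xhat_ne_zero x hc
  · rw [← heq]
    exact inf_le_right

/-- An irreducible submodule of the orthogonal complement of the primary module has
endpoint at least 1. -/
lemma endpoint_pos_of_le_orthC {W : Submodule ℂ (X → ℂ)} (hW : S.IsIrr x W)
    (hle : W ≤ orthC (S.primary x)) : 1 ≤ S.endpoint x W := by
  rw [Nat.one_le_iff_ne_zero]
  intro h0
  have hne := supp_nonempty S x hW.2.1
  have hmem : 0 ∈ S.supp x W := by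
    have := Nat.sInf_mem hne
    rw [AssocScheme.endpoint] at h0
    rwa [h0] at this
  obtain ⟨-, hmap⟩ := hmem
  rw [Ne, map_mulVecLin_eq_bot_iff] at hmap
  push_neg at hmap
  obtain ⟨w, hw, hwne⟩ := hmap
  rw [Estar_zero_mulVec] at hwne
  have hwx : w x ≠ 0 := by
    intro h; rw [h, zero_smul] at hwne; exact hwne rfl
  have := hle hw (xhat x) (xhat_mem_primary S x)
  -- dotc x̂ w = conj (w x)
  rw [show dotc (xhat x) w = (starRingEnd ℂ) (w x) by
    simp [dotc, xhat, Pi.single_apply]] at this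
  exact hwx (by simpa using congrArg (starRingEnd ℂ) this)

end CP
end Chunk5

lemma CP.dotc_sub_left {X : Type*} [Fintype X] (a b u : X → ℂ) :
    dotc (a - b) u = dotc a u - dotc b u := by
  simp [dotc, sub_mul, Finset.sum_sub_distrib]

open AssocScheme in
/-- In a metric symmetric association scheme with Terwilliger algebra
`T = T(x)`, for `χ ∈ V` the following are equivalent: (i) `χ` is orthogonal to every
irreducible `T`-module `W` with endpoint `1 ≤ r(W) ≤ t`; (ii) for every `F ∈ T`, `F χ`
is a relative `t`-codesign with respect to `x`. -/
theorem codesign_characterization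
    {X : Type*} [Fintype X] [DecidableEq X] {D : ℕ}
    (S : AssocScheme X D) (hS : S.IsMetric) (x : X) (χ : X → ℂ) (t : ℕ) :
    (∀ W : Submodule ℂ (X → ℂ), S.IsIrr x W →
        1 ≤ S.endpoint x W → S.endpoint x W ≤ t → ∀ w ∈ W, dotc χ w = 0)
      ↔ (∀ F ∈ S.Talg x, S.RelCodesign x t (F.mulVec χ)) := by
  constructor
  · -- (i) ⇒ (ii)
    intro hχ F hF i hi1 hit
    obtain ⟨m, hm, ho⟩ := CP.ortho_decomp (S.primary x) ((S.Estar x i).mulVec (F.mulVec χ))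
    set v : X → ℂ := (S.Estar x i).mulVec (F.mulVec χ) with hv_def
    set o : X → ℂ := v - m with ho_def
    have hoz : o = 0 := by
      apply CP.dotc_self_eq_zero
      have h1 : dotc m o = 0 := ho m hm
      have hOT : S.IsTSub x (CP.orthC (S.primary x)) := CP.orthC_tsub S x (CP.primary_tsub S x)
      have hoin : o ∈ sSup {W | S.IsIrr x W ∧ W ≤ CP.orthC (S.primary x)} :=
        CP.tsub_le_sSup_irr S x _ _ rfl hOT ho
      set L : (X → ℂ) →ₗ[ℂ] (X → ℂ) :=
        (Fᴴ).mulVecLin.comp ((S.Estar x i).mulVecLin) with hL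
      have key : ∀ W ∈ {W : Submodule ℂ (X → ℂ) | S.IsIrr x W ∧ W ≤ CP.orthC (S.primary x)},
          W ≤ (CP.kerdot χ).comap L := by
        rintro W ⟨hWirr, hWle⟩ w hw
        show dotc χ (L w) = 0
        by_cases hb : Submodule.map (S.Estar x i).mulVecLin W = ⊥
        · have hzero : (S.Estar x i).mulVec w = 0 := (CP.map_mulVecLin_eq_bot_iff).1 hb w hw
          have hLw : L w = 0 := by
            simp [hL, Matrix.mulVecLin_apply, hzero, CP.mulVec_zero']
          rw [hLw, CP.dotc_zero_right]
        · have hiD : i ≤ D := by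
            by_contra hc
            apply hb
            rw [CP.map_mulVecLin_eq_bot_iff]
            intro w' _
            rw [CP.Estar_of_gt S x (by omega), Matrix.zero_mulVec]
          have hisupp : i ∈ S.supp x W := ⟨hiD, hb⟩
          have hend_le : S.endpoint x W ≤ i := Nat.sInf_le hisupp
          have hend_ge : 1 ≤ S.endpoint x W := CP.endpoint_pos_of_le_orthC S x hWirr hWle
          have hWker := hχ W hWirr hend_ge (le_trans hend_le hit)
          have hLw : L w ∈ W :=
            hWirr.1 Fᴴ (CP.conjT_mem_Talg S x hF) _
              (hWirr.1 _ (CP.Estar_mem_Talg S x i) w hw)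
          exact hWker _ hLw
      have hole : o ∈ (CP.kerdot χ).comap L := (sSup_le key) hoin
      have hLo : dotc χ (L o) = 0 := hole
      have hvo : dotc v o = 0 := by
        rw [hv_def, CP.dotc_mulVec_left, CP.Estar_conjT, CP.dotc_mulVec_left]
        simpa [hL, Matrix.mulVecLin_apply] using hLo
      calc dotc o o = dotc (v - m) o := by rw [← ho_def]
        _ = dotc v o - dotc m o := CP.dotc_sub_left v m o
        _ = 0 := by rw [hvo, h1, sub_zero]
    have hvm : v = m := by
      have := sub_eq_zero.1 (ho_def ▸ hoz)
      exact this
    have hvprim : v ∈ S.primary x := hvm ▸ hm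
    obtain ⟨c, hc⟩ := CP.Estar_primary S x i hvprim
    refine ⟨c, ?_⟩
    have hidem : (S.Estar x i).mulVec v = v := by
      rw [hv_def]
      exact CP.Estar_idem S x i (F.mulVec χ)
    rw [hv_def] at hidem hc ⊢
    rw [← CP.Estar_idem S x i (F.mulVec χ)]
    exact hc
  · -- (ii) ⇒ (i)
    intro hR W hWirr h1 ht w hw
    have hWle := CP.irr_le_orthC_primary S x hWirr h1
    set r := S.endpoint x W with hr
    have hsupp := CP.supp_nonempty S x hWirr.2.1
    have hrmem : r ∈ S.supp x W := Nat.sInf_mem hsupp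
    set G : Set (X → ℂ) :=
      {v | ∃ F ∈ S.Talg x, ∃ w' ∈ W, v = F.mulVec ((S.Estar x r).mulVec w')} with hG
    have hGW : Submodule.span ℂ G ≤ W := by
      rw [Submodule.span_le]
      rintro _ ⟨F, hF, w', hw', rfl⟩
      exact hWirr.1 F hF _ (hWirr.1 _ (CP.Estar_mem_Talg S x r) w' hw')
    have hGT : S.IsTSub x (Submodule.span ℂ G) := by
      intro F hF v hv
      induction hv using Submodule.span_induction with
      | mem g hg =>
        obtain ⟨F', hF', w', hw', rfl⟩ := hg
        rw [Matrix.mulVec_mulVec]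
        exact Submodule.subset_span ⟨F * F', Subalgebra.mul_mem _ hF hF', w', hw', rfl⟩
      | zero => rw [CP.mulVec_zero']; exact Submodule.zero_mem _
      | add a b _ _ iha ihb => rw [Matrix.mulVec_add]; exact Submodule.add_mem _ iha ihb
      | smul c a _ iha => rw [CP.mulVec_smul']; exact Submodule.smul_mem _ _ iha
    have hGbot : Submodule.span ℂ G ≠ ⊥ := by
      obtain ⟨-, hmap⟩ := hrmem
      rw [Ne, CP.map_mulVecLin_eq_bot_iff] at hmap
      push_neg at hmap
      obtain ⟨w', hw', hwne⟩ := hmap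
      intro hsb
      apply hwne
      have hmem : (S.Estar x r).mulVec w' ∈ Submodule.span ℂ G :=
        Submodule.subset_span ⟨1, Subalgebra.one_mem _, w', hw', (Matrix.one_mulVec _).symm⟩
      rw [hsb] at hmem
      simpa using hmem
    have hWspan : W ≤ Submodule.span ℂ G := by
      rcases hWirr.2.2 _ hGW hGT with h | h
      · exact absurd h hGbot
      · exact h.ge
    have hker : Submodule.span ℂ G ≤ CP.kerdot χ := by
      rw [Submodule.span_le]
      rintro _ ⟨F, hF, w', hw', rfl⟩
      show dotc χ (F.mulVec ((S.Estar x r).mulVec w')) = 0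
      obtain ⟨c, hc⟩ := hR Fᴴ (CP.conjT_mem_Talg S x hF) r h1 ht
      rw [CP.dotc_comm, CP.dotc_mulVec_left, CP.dotc_mulVec_left, CP.Estar_conjT, hc,
        CP.dotc_smul_right]
      have hAmem : (S.AM r).mulVec (xhat x) ∈ S.primary x := CP.AM_xhat_mem_primary S x r
      have hzero : dotc w' ((S.AM r).mulVec (xhat x)) = 0 := by
        rw [CP.dotc_comm]
        rw [hWle hw' _ hAmem]
        simp
      rw [hzero, mul_zero]
      simp
    exact hker (hWspan hw)
end
end
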